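/- arXiv:0901.3348 — 4 statements merged into one kernel-verified Lean document; each statement's English description precedes it below -/
import Mathlib

section
/- Fix p ∈ (0,1). There exist constants c₁ > 0 and c₂ ∈ (0,1), depending only on p, such that for all positive integers n and N the following holds. Let A be an n×N random matrix with entries independent and identically distributed according to Ω. For each column j, let n_j denote the number of entries of column j of A equal to 1. Define the matrix Ã by: Ã_{ij} = 1 for every (i,j) with A_{ij} = 1, and Ã_{ij} = −n_j/(n − n_j) for every (i,j) with A_{ij} = −p/(1−p) (if n_j = n for some j, the event below is declared to fail, i.e., ‖A − Ã‖_F is taken to be +∞). Then P(‖A − Ã‖_F² ≤ c₁ N) ≥ 1 − (2/3)^N − N c₂^n. -/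
open MeasureTheory ProbabilityTheory Matrix

open scoped Classical in
/-- The number of entries equal to `1` in column `j` of `A`. -/
noncomputable def onesInColumn {n N : ℕ} (A : Matrix (Fin n) (Fin N) ℝ) (j : Fin N) : ℕ :=
  (Finset.univ.filter fun i => A i j = 1).card

open scoped Classical in
/-- The matrix `Ã` built from `A`: entries equal to `1` stay `1`; other entries of column `j`
are replaced by `−n_j/(n − n_j)` where `n_j` is the number of `1`s in column `j`. -/
noncomputable def tildeMatrix {n N : ℕ} (A : Matrix (Fin n) (Fin N) ℝ) :
    Matrix (Fin n) (Fin N) ℝ :=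
  Matrix.of fun i j =>
    if A i j = 1 then 1
    else -(onesInColumn A j : ℝ) / ((n : ℝ) - (onesInColumn A j : ℝ))

/-- The Frobenius norm of a real matrix. -/
noncomputable def frobeniusNorm {m n : Type*} [Fintype m] [Fintype n]
    (A : Matrix m n ℝ) : ℝ :=
  Real.sqrt (∑ i, ∑ j, (A i j) ^ 2)

/-- The two-point distribution Ω with parameter `p`: value `1` with probability `p` and
value `−p/(1−p)` with probability `1−p`. -/
noncomputable def omegaDist (p : ℝ) : Measure ℝ :=
  ENNReal.ofReal p • Measure.dirac (1 : ℝ)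
    + ENNReal.ofReal (1 - p) • Measure.dirac (-p / (1 - p))

/-!
Write `n_j` for the number of ones in column `j` and `d_j = n_j - p n`. Off the ones of `A`,
column `j` of `A - Ã` is constant, equal to `d_j / ((1 - p) (n - n_j))`, so its squared norm is
`d_j² / ((1 - p)² (n - n_j))`, which is at most `2 / (1 - p)³ · d_j² / n` as soon as
`d_j < (1 - p) n / 2`.

By Hoeffding's lemma, `d_j` is a sum of `n` independent centred Bernoulli variables, hence
sub-Gaussian with variance proxy `n / 4`. This gives `P(d_j ≥ (1 - p) n / 2) ≤ exp(-(1 - p)² / 2)ⁿ`,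
and tails `P(Z_j ≥ m) ≤ 2 e^{-2m}` for `Z_j = d_j² / n`, so `E e^{Z_j} ≤ 4e`. The `Z_j`
are functions of disjoint columns, hence independent, and a Chernoff bound gives
`P(∑ Z_j ≥ 3N) ≤ (2/3)^N`. Outside these two events `‖A - Ã‖_F² ≤ 6N / (1 - p)³`.
-/

open Real Finset
open scoped NNReal

namespace ProbabilityTheory

variable {Ω : Type*} {mΩ : MeasurableSpace Ω} {μ : Measure Ω}

lemma iIndepFun.curry {ι κ 𝓧 : Type*} [MeasurableSpace 𝓧] {X : ι → κ → Ω → 𝓧}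
    (mX : ∀ i j, Measurable (X i j)) (h : iIndepFun (fun p : ι × κ ↦ X p.1 p.2) μ) :
    iIndepFun (fun i ω ↦ (X i · ω)) μ := by
  have := h.isProbabilityMeasure
  have : ∀ i j, IsProbabilityMeasure (μ.map (X i j)) :=
    fun i j ↦ Measure.isProbabilityMeasure_map (mX i j).aemeasurable
  have hrow (i : ι) : μ.map (fun ω ↦ (X i · ω)) = Measure.infinitePi (fun j ↦ μ.map (X i j)) :=
    (h.precomp (Prod.mk_right_injective i)).map_fun_eq_infinitePi_map (mX i)
  have hall : μ.map (fun ω (p : ι × κ) ↦ X p.1 p.2 ω) =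
      Measure.infinitePi (fun p ↦ μ.map (X p.1 p.2)) :=
    h.map_fun_eq_infinitePi_map (fun p ↦ mX p.1 p.2)
  rw [iIndepFun_iff_map_fun_eq_infinitePi_map (fun i ↦ by fun_prop)]
  have hcurry : (fun ω i j ↦ X i j ω) = MeasurableEquiv.curry ι κ 𝓧 ∘ (fun ω p ↦ X p.1 p.2 ω) :=
    rfl
  rw [hcurry, ← Measure.map_map (by fun_prop) (by fun_prop), hall,
    Measure.infinitePi_map_curry (fun i j ↦ μ.map (X i j))]
  simp_rw [hrow]

lemma hasSubgaussianMGF_indicator_sub_measureReal [IsProbabilityMeasure μ] {s : Set Ω}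
    (hs : MeasurableSet s) :
    HasSubgaussianMGF (fun ω ↦ s.indicator 1 ω - μ.real s) (1 / 4) μ := by
  have h := hasSubgaussianMGF_of_mem_Icc (X := s.indicator (1 : Ω → ℝ)) (a := 0) (b := 1)
    (μ := μ) ((measurable_one.indicator hs).aemeasurable)
    (ae_of_all _ fun ω ↦ ⟨Set.indicator_nonneg (fun _ _ ↦ zero_le_one) ω,
      Set.indicator_le_self' (fun _ _ ↦ zero_le_one) ω⟩)
  rw [integral_indicator_one hs] at h
  convert h using 1
  ext
  norm_num

lemma HasSubgaussianMGF.measureReal_sq_ge_le [IsFiniteMeasure μ] {X : Ω → ℝ} {c : ℝ≥0}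
    (h : HasSubgaussianMGF X c μ) {ε : ℝ} (hε : 0 ≤ ε) :
    μ.real {ω | ε ≤ X ω ^ 2} ≤ 2 * exp (-ε / (2 * c)) := by
  have hsplit : {ω | ε ≤ X ω ^ 2} ⊆ {ω | √ε ≤ X ω} ∪ {ω | √ε ≤ (-X) ω} := by
    intro ω hω
    have habs : √ε ≤ |X ω| := sqrt_sq_eq_abs (X ω) ▸ sqrt_le_sqrt hω
    rcases abs_choice (X ω) with h | h
    · exact Or.inl (by simpa [h] using habs)
    · exact Or.inr (by simpa [h] using habs)
  calc μ.real {ω | ε ≤ X ω ^ 2}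
      ≤ μ.real {ω | √ε ≤ X ω} + μ.real {ω | √ε ≤ (-X) ω} :=
        (measureReal_mono hsplit).trans (measureReal_union_le _ _)
    _ ≤ exp (-√ε ^ 2 / (2 * c)) + exp (-√ε ^ 2 / (2 * c)) :=
        add_le_add (h.measure_ge_le (sqrt_nonneg ε)) (h.neg.measure_ge_le (sqrt_nonneg ε))
    _ = 2 * exp (-ε / (2 * c)) := by rw [sq_sqrt hε]; ring

lemma mgf_le_sum_exp_mul_measureReal_ge [IsFiniteMeasure μ] {Z : Ω → ℝ} (hZ : Measurable Z)
    {K : ℕ} (h0 : ∀ ω, 0 ≤ Z ω) (hK : ∀ ω, Z ω ≤ K) {t : ℝ} (ht : 0 ≤ t) :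
    mgf Z μ t ≤ ∑ m ∈ range (K + 1), exp (t * (m + 1)) * μ.real {ω | m ≤ Z ω} := by
  let layer (m : ℕ) : Ω → ℝ := {ω | (m : ℝ) ≤ Z ω}.indicator fun _ ↦ exp (t * (m + 1))
  have hlayer (m : ℕ) : Integrable (layer m) μ :=
    (integrable_const _).indicator (measurableSet_le measurable_const hZ)
  have hpt (ω : Ω) : exp (t * Z ω) ≤ ∑ m ∈ range (K + 1), layer m ω := by
    have hfloor : ⌊Z ω⌋₊ ∈ range (K + 1) :=
      mem_range.2 (Nat.lt_succ_of_le (Nat.floor_le_of_le (hK ω)))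
    refine le_trans ?_ (single_le_sum (fun m _ ↦ Set.indicator_nonneg
      (fun _ _ ↦ (exp_pos _).le) ω) hfloor)
    rw [Set.indicator_of_mem (show ω ∈ {ω' | (⌊Z ω⌋₊ : ℝ) ≤ Z ω'} from Nat.floor_le (h0 ω))]
    gcongr
    exact (Nat.lt_floor_add_one _).le
  calc mgf Z μ t ≤ ∫ ω, ∑ m ∈ range (K + 1), layer m ω ∂μ :=
        integral_mono_of_nonneg (ae_of_all _ fun ω ↦ (exp_pos _).le)
          (integrable_finsetSum _ fun m _ ↦ hlayer m) (ae_of_all _ hpt)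
    _ = ∑ m ∈ range (K + 1), exp (t * (m + 1)) * μ.real {ω | m ≤ Z ω} := by
        rw [integral_finsetSum _ fun m _ ↦ hlayer m]
        refine sum_congr rfl fun m _ ↦ ?_
        rw [integral_indicator_const _ (measurableSet_le measurable_const hZ), smul_eq_mul,
          mul_comm]

lemma mgf_one_le_of_measureReal_ge_le [IsFiniteMeasure μ] {Z : Ω → ℝ} (hZ : Measurable Z)
    {K : ℕ} (h0 : ∀ ω, 0 ≤ Z ω) (hK : ∀ ω, Z ω ≤ K)
    (htail : ∀ m : ℕ, μ.real {ω | m ≤ Z ω} ≤ 2 * exp (-2 * m)) :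
    mgf Z μ 1 ≤ 4 * exp 1 := by
  have hr : exp (-1) < 1 / 2 := exp_neg_one_lt_half
  calc mgf Z μ 1 ≤ ∑ m ∈ range (K + 1), exp (1 * (m + 1)) * μ.real {ω | m ≤ Z ω} :=
        mgf_le_sum_exp_mul_measureReal_ge hZ h0 hK zero_le_one
    _ ≤ ∑ m ∈ range (K + 1), 2 * exp 1 * exp (-1) ^ m := by
        refine sum_le_sum fun m _ ↦ ?_
        calc exp (1 * (m + 1)) * μ.real {ω | m ≤ Z ω}
            ≤ exp (1 * (m + 1)) * (2 * exp (-2 * m)) := by gcongr; exact htail m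
          _ = 2 * exp 1 * exp (-1) ^ m := by
              rw [← exp_nat_mul, mul_left_comm, mul_assoc, ← exp_add, ← exp_add]; ring_nf
    _ = 2 * exp 1 * ∑ m ∈ Ico 0 (K + 1), exp (-1) ^ m := by rw [mul_sum, range_eq_Ico]
    _ ≤ 2 * exp 1 * (exp (-1) ^ 0 / (1 - exp (-1))) := by
        gcongr
        exact geom_sum_Ico_le_of_lt_one (exp_pos _).le (hr.trans (by norm_num))
    _ ≤ 2 * exp 1 * 2 := by
        gcongr
        rw [pow_zero, div_le_iff₀ (by linarith)]
        linarith
    _ = 4 * exp 1 := by ring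

lemma measureReal_sum_ge_le_of_iIndepFun {ι : Type*} [Fintype ι] {Z : ι → Ω → ℝ}
    (hind : iIndepFun Z μ) (hZ : ∀ i, Measurable (Z i)) {t M : ℝ} (ht : 0 ≤ t)
    (hint : ∀ i, Integrable (fun ω ↦ exp (t * Z i ω)) μ) (hM : ∀ i, mgf (Z i) μ t ≤ M) (ε : ℝ) :
    μ.real {ω | ε ≤ ∑ i, Z i ω} ≤ exp (-t * ε) * M ^ Fintype.card ι := by
  have := hind.isProbabilityMeasure
  have h := measure_ge_le_exp_mul_mgf ε ht
    (hind.integrable_exp_mul_sum hZ (s := Finset.univ) fun i _ ↦ hint i)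
  simp only [Finset.sum_apply, hind.mgf_sum hZ] at h
  refine h.trans ?_
  gcongr
  exact (prod_le_prod (fun i _ ↦ mgf_nonneg) fun i _ ↦ hM i).trans_eq (by simp)

lemma ofReal_one_sub_le_measure_of_ae_imp [IsProbabilityMeasure μ] {T B : Set Ω} {b : ℝ}
    (h : ∀ᵐ ω ∂μ, ω ∉ B → ω ∈ T) (hB : μ.real B ≤ b) : ENNReal.ofReal (1 - b) ≤ μ T := by
  have hcover : 1 ≤ μ T + μ B := calc
    1 = μ Set.univ := measure_univ.symm
    _ ≤ μ (T ∪ B) := measure_mono_ae (h.mono fun ω hω _ ↦ (em (ω ∈ B)).elim Or.inr (Or.inl ∘ hω))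
    _ ≤ μ T + μ B := measure_union_le T B
  have hb : μ B ≤ ENNReal.ofReal b := by
    rw [← ofReal_measureReal]
    exact ENNReal.ofReal_le_ofReal hB
  calc ENNReal.ofReal (1 - b) = 1 - ENNReal.ofReal b := by
        rw [ENNReal.ofReal_sub _ (measureReal_nonneg.trans hB), ENNReal.ofReal_one]
    _ ≤ 1 - μ B := tsub_le_tsub_left hb 1
    _ ≤ μ T := tsub_le_iff_right.2 hcover

end ProbabilityTheory

lemma four_mul_exp_neg_two_le : 4 * exp (-2) ≤ 2 / 3 := by
  have he := exp_one_gt_d9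
  have h2 : exp 2 = exp 1 ^ 2 := by rw [← exp_nat_mul]; norm_num
  rw [exp_neg, h2]
  field_simp
  nlinarith

lemma omegaDist_ae_eq_one_or (p : ℝ) : ∀ᵐ x ∂omegaDist p, x = 1 ∨ x = -p / (1 - p) := by
  simp only [omegaDist, ae_add_measure_iff]
  exact ⟨Measure.ae_smul_measure (by simp [ae_dirac_eq]) _,
    Measure.ae_smul_measure (by simp [ae_dirac_eq]) _⟩

lemma neg_div_one_sub_ne_one {p : ℝ} (hp1 : p < 1) : -p / (1 - p) ≠ 1 := by
  rw [ne_eq, div_eq_one_iff_eq (by linarith)]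
  linarith

lemma omegaDist_real_singleton_one {p : ℝ} (hp0 : 0 ≤ p) (hp1 : p < 1) :
    (omegaDist p).real {1} = p := by
  simp [omegaDist, Measure.real, neg_div_one_sub_ne_one hp1, hp0]

section Deterministic

variable {n N : ℕ}

noncomputable def columnDeviation (p : ℝ) (M : Matrix (Fin n) (Fin N) ℝ) (j : Fin N) : ℝ :=
  onesInColumn M j - p * n

lemma onesInColumn_eq_sum (M : Matrix (Fin n) (Fin N) ℝ) (j : Fin N) :
    (onesInColumn M j : ℝ) = ∑ i, ({1} : Set ℝ).indicator 1 (M i j) := by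
  simp [onesInColumn, Set.indicator_apply, Finset.sum_boole]

lemma columnDeviation_eq_sum (p : ℝ) (M : Matrix (Fin n) (Fin N) ℝ) (j : Fin N) :
    columnDeviation p M j = ∑ i, (({1} : Set ℝ).indicator 1 (M i j) - p) := by
  simp [columnDeviation, onesInColumn_eq_sum, Finset.sum_sub_distrib, mul_comm]

lemma abs_columnDeviation_le {p : ℝ} (hp0 : 0 ≤ p) (hp1 : p ≤ 1)
    (M : Matrix (Fin n) (Fin N) ℝ) (j : Fin N) : |columnDeviation p M j| ≤ n := by
  have hk : (onesInColumn M j : ℝ) ≤ n := by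
    exact_mod_cast (Finset.card_filter_le _ _).trans_eq (Finset.card_fin n)
  rw [columnDeviation, abs_le]
  constructor <;> nlinarith [(onesInColumn M j).cast_nonneg (α := ℝ), (n.cast_nonneg : (0:ℝ) ≤ n)]

lemma sum_sq_sub_tildeMatrix_le {p : ℝ} (hp1 : p < 1) {M : Matrix (Fin n) (Fin N) ℝ} {j : Fin N}
    (hM : ∀ i, M i j = 1 ∨ M i j = -p / (1 - p))
    (hdev : columnDeviation p M j < (1 - p) * n / 2) :
    onesInColumn M j < n ∧
      ∑ i, (M - tildeMatrix M) i j ^ 2 ≤ 2 / (1 - p) ^ 3 * (columnDeviation p M j ^ 2 / n) := by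
  set k : ℝ := (onesInColumn M j : ℝ)
  set d := columnDeviation p M j
  have h1p : 0 < 1 - p := by linarith
  have hgap : (1 - p) * n / 2 < n - k := by simp only [d, columnDeviation] at hdev; linarith
  have hn : (0 : ℝ) < n := by
    nlinarith [(onesInColumn M j).cast_nonneg (α := ℝ), (n.cast_nonneg : (0:ℝ) ≤ n)]
  have hnk : 0 < (n : ℝ) - k := lt_of_le_of_lt (by positivity) hgap
  refine ⟨Nat.cast_lt.1 (show k < n by linarith), ?_⟩
  have hentry (i : Fin n) : (M - tildeMatrix M) i j ^ 2 =
      (1 - ({1} : Set ℝ).indicator 1 (M i j)) * (d / ((1 - p) * (n - k))) ^ 2 := by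
    rcases hM i with h | h
    · simp [tildeMatrix, h]
    · have hne : M i j ≠ 1 := h ▸ neg_div_one_sub_ne_one hp1
      rw [Set.indicator_of_notMem (show M i j ∉ ({1} : Set ℝ) from hne)]
      simp only [Matrix.sub_apply, tildeMatrix, Matrix.of_apply, if_neg hne, d, k, columnDeviation]
      have hnk' : (n : ℝ) - onesInColumn M j ≠ 0 := hnk.ne'
      rw [h]
      field_simp
      ring
  calc ∑ i, (M - tildeMatrix M) i j ^ 2 = (n - k) * (d / ((1 - p) * (n - k))) ^ 2 := by
        simp_rw [hentry]
        rw [← sum_mul, sum_sub_distrib, ← onesInColumn_eq_sum]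
        simp [k]
    _ = d ^ 2 / ((1 - p) ^ 2 * (n - k)) := by field_simp
    _ ≤ d ^ 2 / ((1 - p) ^ 2 * ((1 - p) * n / 2)) := by gcongr
    _ = 2 / (1 - p) ^ 3 * (d ^ 2 / n) := by field_simp

lemma frobeniusNorm_sq {m n : Type*} [Fintype m] [Fintype n] (M : Matrix m n ℝ) :
    frobeniusNorm M ^ 2 = ∑ i, ∑ j, M i j ^ 2 :=
  sq_sqrt (by positivity)

lemma frobeniusNorm_sub_tildeMatrix_sq_le {p : ℝ} (hp1 : p < 1) {M : Matrix (Fin n) (Fin N) ℝ}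
    (hM : ∀ i j, M i j = 1 ∨ M i j = -p / (1 - p))
    (hdev : ∀ j, columnDeviation p M j < (1 - p) * n / 2) :
    (∀ j, onesInColumn M j < n) ∧ frobeniusNorm (M - tildeMatrix M) ^ 2 ≤
      2 / (1 - p) ^ 3 * ∑ j, columnDeviation p M j ^ 2 / n := by
  have hcol (j : Fin N) := sum_sq_sub_tildeMatrix_le hp1 (fun i ↦ hM i j) (hdev j)
  refine ⟨fun j ↦ (hcol j).1, ?_⟩
  rw [frobeniusNorm_sq, sum_comm, mul_sum]
  exact sum_le_sum fun j _ ↦ (hcol j).2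

end Deterministic

structure IsIIDOmegaMatrix {n N : ℕ} (p : ℝ) {Ω : Type*} [MeasurableSpace Ω] (μ : Measure Ω)
    (A : Ω → Matrix (Fin n) (Fin N) ℝ) : Prop where
  measurable_entry : ∀ i j, Measurable fun ω ↦ A ω i j
  iIndepFun_entry : iIndepFun (fun (e : Fin n × Fin N) ω ↦ A ω e.1 e.2) μ
  map_entry : ∀ e : Fin n × Fin N, μ.map (fun ω ↦ A ω e.1 e.2) = omegaDist p

namespace IsIIDOmegaMatrix

variable {n N : ℕ} {p : ℝ} {Ω : Type*} {mΩ : MeasurableSpace Ω} {μ : Measure Ω}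
  {A : Ω → Matrix (Fin n) (Fin N) ℝ}

lemma ae_forall_entry_eq_one_or (hA : IsIIDOmegaMatrix p μ A) :
    ∀ᵐ ω ∂μ, ∀ i j, A ω i j = 1 ∨ A ω i j = -p / (1 - p) := by
  simp only [ae_all_iff]
  intro i j
  exact ae_of_ae_map (hA.measurable_entry i j).aemeasurable
    (hA.map_entry (i, j) ▸ omegaDist_ae_eq_one_or p)

lemma hasSubgaussianMGF_columnDeviation (hA : IsIIDOmegaMatrix p μ A) (hp0 : 0 ≤ p) (hp1 : p < 1)
    (j : Fin N) : HasSubgaussianMGF (fun ω ↦ columnDeviation p (A ω) j) (n / 4) μ := by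
  have := hA.iIndepFun_entry.isProbabilityMeasure
  let g : ℝ → ℝ := fun x ↦ ({1} : Set ℝ).indicator 1 x - p
  have hg : Measurable g := (measurable_one.indicator (measurableSet_singleton 1)).sub_const p
  have hentry (i : Fin n) : HasSubgaussianMGF (fun ω ↦ g (A ω i j)) (1 / 4) μ := by
    have hprob : μ.real ((fun ω ↦ A ω i j) ⁻¹' {1}) = p := by
      rw [← omegaDist_real_singleton_one hp0 hp1, ← hA.map_entry (i, j),
        map_measureReal_apply (hA.measurable_entry i j) (measurableSet_singleton 1)]
    have h := hasSubgaussianMGF_indicator_sub_measureReal (μ := μ)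
      (hA.measurable_entry i j (measurableSet_singleton 1))
    rw [hprob] at h
    exact h
  have hcol : iIndepFun (fun i ω ↦ g (A ω i j)) μ :=
    (hA.iIndepFun_entry.precomp (Prod.mk_left_injective j)).comp (fun _ ↦ g) (fun _ ↦ hg)
  convert HasSubgaussianMGF.sum_of_iIndepFun hcol (s := Finset.univ) fun i _ ↦ hentry i using 1
  · simp only [columnDeviation_eq_sum, g]
  · simp [div_eq_mul_inv]

lemma measureReal_columnDeviation_ge_le (hA : IsIIDOmegaMatrix p μ A) (hp0 : 0 ≤ p) (hp1 : p < 1)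
    (hn : 0 < n) (j : Fin N) :
    μ.real {ω | (1 - p) * n / 2 ≤ columnDeviation p (A ω) j} ≤ exp (-(1 - p) ^ 2 / 2) ^ n := by
  have h1p : 0 < 1 - p := by linarith
  refine ((hA.hasSubgaussianMGF_columnDeviation hp0 hp1 j).measure_ge_le
    (by positivity)).trans_eq ?_
  rw [← exp_nat_mul]
  congr 1
  push_cast
  field_simp
  ring

lemma measureReal_columnDeviation_sq_div_ge_le (hA : IsIIDOmegaMatrix p μ A) (hp0 : 0 ≤ p)
    (hp1 : p < 1) (hn : 0 < n) (j : Fin N) (m : ℕ) :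
    μ.real {ω | m ≤ columnDeviation p (A ω) j ^ 2 / n} ≤ 2 * exp (-2 * m) := by
  have := hA.iIndepFun_entry.isProbabilityMeasure
  have hn' : (0 : ℝ) < n := by exact_mod_cast hn
  simp_rw [le_div_iff₀ hn']
  refine ((hA.hasSubgaussianMGF_columnDeviation hp0 hp1 j).measureReal_sq_ge_le
    (by positivity)).trans_eq ?_
  congr 2
  push_cast
  field_simp
  ring

lemma iIndepFun_columnDeviation_sq_div (hA : IsIIDOmegaMatrix p μ A) :
    iIndepFun (fun j ω ↦ columnDeviation p (A ω) j ^ 2 / n) μ := by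
  have hcols : iIndepFun (fun j ω i ↦ A ω i j) μ :=
    iIndepFun.curry (X := fun j i ω ↦ A ω i j) (fun j i ↦ hA.measurable_entry i j)
      (hA.iIndepFun_entry.precomp Prod.swap_injective)
  have hφ : Measurable fun v : Fin n → ℝ ↦ (∑ i, (({1} : Set ℝ).indicator 1 (v i) - p)) ^ 2 / n :=
    by fun_prop (disch := exact measurableSet_singleton 1)
  simp only [columnDeviation_eq_sum]
  exact hcols.comp _ fun _ ↦ hφ

lemma measureReal_sum_columnDeviation_sq_div_ge_le (hA : IsIIDOmegaMatrix p μ A) (hp0 : 0 ≤ p)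
    (hp1 : p < 1) (hn : 0 < n) :
    μ.real {ω | 3 * N ≤ ∑ j, columnDeviation p (A ω) j ^ 2 / n} ≤ (2 / 3) ^ N := by
  have := hA.iIndepFun_entry.isProbabilityMeasure
  have hZ (j : Fin N) : Measurable fun ω ↦ columnDeviation p (A ω) j ^ 2 / n := by
    simp only [columnDeviation_eq_sum]
    have := hA.measurable_entry
    fun_prop (disch := exact measurableSet_singleton 1)
  have h0 (j : Fin N) (ω : Ω) : 0 ≤ columnDeviation p (A ω) j ^ 2 / n := by positivity
  have hK (j : Fin N) (ω : Ω) : columnDeviation p (A ω) j ^ 2 / n ≤ n := by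
    have hn' : (0 : ℝ) < n := by exact_mod_cast hn
    rw [div_le_iff₀ hn', ← sq, ← sq_abs]
    exact pow_le_pow_left₀ (abs_nonneg _) (abs_columnDeviation_le hp0 hp1.le _ _) 2
  have hint (j : Fin N) : Integrable (fun ω ↦ exp (1 * (columnDeviation p (A ω) j ^ 2 / n))) μ :=
    Integrable.of_bound ((hZ j).const_mul 1).exp.aestronglyMeasurable (exp n)
      (ae_of_all _ fun ω ↦ by
        rw [Real.norm_eq_abs, abs_exp, one_mul]
        exact exp_le_exp.2 (hK j ω))
  calc μ.real {ω | 3 * N ≤ ∑ j, columnDeviation p (A ω) j ^ 2 / n}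
      ≤ exp (-1 * (3 * N)) * (4 * exp 1) ^ Fintype.card (Fin N) :=
        measureReal_sum_ge_le_of_iIndepFun hA.iIndepFun_columnDeviation_sq_div hZ zero_le_one hint
          (fun j ↦ mgf_one_le_of_measureReal_ge_le (hZ j) (h0 j) (hK j)
            (hA.measureReal_columnDeviation_sq_div_ge_le hp0 hp1 hn j)) _
    _ = (4 * exp (-2)) ^ N := by
        rw [Fintype.card_fin, show -1 * (3 * (N : ℝ)) = N * (-3) by ring, exp_nat_mul, ← mul_pow,
          mul_left_comm, ← exp_add]
        norm_num
    _ ≤ (2 / 3) ^ N := pow_le_pow_left₀ (by positivity) four_mul_exp_neg_two_le N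

end IsIIDOmegaMatrix

/-- for `p ∈ (0,1)` there are `c₁ > 0` and `c₂ ∈ (0,1)` depending only on `p`
such that for all `n, N ≥ 1`, a random `n × N` matrix with i.i.d. Ω-distributed entries
satisfies `‖A − Ã‖_F² ≤ c₁ N` (in particular no column is all ones) with probability at
least `1 − (2/3)^N − N c₂^n`. -/
theorem frobenius_bound_A_tildeA
    (p : ℝ) (hp : p ∈ Set.Ioo (0 : ℝ) 1) :
    ∃ c₁ > (0 : ℝ), ∃ c₂ ∈ Set.Ioo (0 : ℝ) 1, ∀ n N : ℕ, 0 < n → 0 < N →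
      ∀ (Ω : Type) (mΩ : MeasurableSpace Ω) (μ : Measure Ω),
        IsProbabilityMeasure μ →
        ∀ A : Ω → Matrix (Fin n) (Fin N) ℝ,
          (∀ i j, Measurable fun ω => A ω i j) →
          iIndepFun
            (fun (e : Fin n × Fin N) ω => A ω e.1 e.2) μ →
          (∀ e : Fin n × Fin N, μ.map (fun ω => A ω e.1 e.2) = omegaDist p) →
          μ {ω | (∀ j, onesInColumn (A ω) j < n) ∧
                 frobeniusNorm (A ω - tildeMatrix (A ω)) ^ 2 ≤ c₁ * N}
            ≥ ENNReal.ofReal (1 - (2 / 3 : ℝ) ^ N - (N : ℝ) * c₂ ^ n) := by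
  obtain ⟨hp0, hp1⟩ := hp
  have h1p : 0 < 1 - p := by linarith
  refine ⟨6 / (1 - p) ^ 3, by positivity, exp (-(1 - p) ^ 2 / 2),
    ⟨exp_pos _, exp_lt_one_iff.2 (by nlinarith)⟩, ?_⟩
  intro n N hn _ Ω _ μ _ A hmeas hind hlaw
  have hA : IsIIDOmegaMatrix p μ A := ⟨hmeas, hind, hlaw⟩
  let B := (⋃ j, {ω | (1 - p) * n / 2 ≤ columnDeviation p (A ω) j}) ∪
    {ω | 3 * N ≤ ∑ j, columnDeviation p (A ω) j ^ 2 / n}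
  have hgood : ∀ᵐ ω ∂μ, ω ∉ B → (∀ j, onesInColumn (A ω) j < n) ∧
      frobeniusNorm (A ω - tildeMatrix (A ω)) ^ 2 ≤ 6 / (1 - p) ^ 3 * N := by
    filter_upwards [hA.ae_forall_entry_eq_one_or] with ω hentries hB
    simp only [B, Set.mem_union, Set.mem_iUnion, Set.mem_ofPred_eq, not_or, not_exists,
      not_le] at hB
    obtain ⟨hones, hfrob⟩ := frobeniusNorm_sub_tildeMatrix_sq_le hp1 hentries hB.1
    refine ⟨hones, hfrob.trans ?_⟩
    calc 2 / (1 - p) ^ 3 * ∑ j, columnDeviation p (A ω) j ^ 2 / n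
        ≤ 2 / (1 - p) ^ 3 * (3 * N) := by gcongr; exact hB.2.le
      _ = 6 / (1 - p) ^ 3 * N := by ring
  have hbad : μ.real B ≤ (2 / 3) ^ N + N * exp (-(1 - p) ^ 2 / 2) ^ n := calc
    μ.real B ≤ ∑ j : Fin N, exp (-(1 - p) ^ 2 / 2) ^ n + (2 / 3) ^ N :=
      (measureReal_union_le _ _).trans <| add_le_add
        ((measureReal_iUnion_fintype_le _).trans <| sum_le_sum fun j _ ↦
          hA.measureReal_columnDeviation_ge_le hp0.le hp1 hn j)
        (hA.measureReal_sum_columnDeviation_sq_div_ge_le hp0.le hp1 hn)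
    _ = (2 / 3) ^ N + N * exp (-(1 - p) ^ 2 / 2) ^ n := by simp [add_comm]
  rw [ge_iff_le, sub_sub]
  exact ofReal_one_sub_le_measure_of_ae_imp hgood hbad
end

section
/- Let A ∈ R^{m×n} have rank r with singular value decomposition A = Σ_{k=1}^r σ_k u_k v_kᵀ (σ_k > 0, the u_k orthonormal in R^m, the v_k orthonormal in R^n). Then φ ∈ R^{m×n} is a subgradient of the nuclear norm ‖·‖_* at A if and only if φ = Σ_{k=1}^r u_k v_kᵀ + W for some W ∈ R^{m×n} with ‖W‖ ≤ 1 such that Wᵀ u_k = 0 and W v_k = 0 for all k = 1, …, r. -/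
open Matrix

/-- The spectral norm (largest singular value) of a real matrix. -/
noncomputable def matSpectralNorm {m n : Type*} [Fintype m] [Fintype n] [DecidableEq n]
    (A : Matrix m n ℝ) : ℝ :=
  ‖LinearMap.toContinuousLinearMap (Matrix.toEuclideanLin A)‖

theorem Matrix.isHermitian_transpose_mul_self {m n : Type*} [Fintype m] (A : Matrix m n ℝ) :
    (Aᵀ * A).IsHermitian := by
  simpa using Matrix.isHermitian_conjTranspose_mul_self A

/-- The nuclear norm (sum of singular values) of a real matrix, given as the sum of the
square roots of the eigenvalues of `Aᴴ A`. -/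
noncomputable def nuclearNorm {m n : Type*} [Fintype m] [Fintype n] [DecidableEq n]
    (A : Matrix m n ℝ) : ℝ :=
  ∑ j, Real.sqrt ((Matrix.isHermitian_transpose_mul_self A).eigenvalues j)

/-- The Frobenius inner product of two matrices. -/
def frobInner {m n : Type*} [Fintype m] [Fintype n] (A B : Matrix m n ℝ) : ℝ :=
  ∑ i, ∑ j, A i j * B i j

/-!
The nuclear and spectral norms are dual: `⟨Z, Y⟩ ≤ ‖Y‖_*` whenever `‖Z‖ ≤ 1`, with equality for
the polar factor of `Y`, built from an orthonormal eigenbasis of `YᵀY`. Hence `φ` is a subgradient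
at `A` iff `‖φ‖ ≤ 1` and `⟨φ, A⟩ = ‖A‖_* = ∑ σ_k`, i.e. iff `u_kᵀ φ v_k = 1` for every `k`; for a
contraction this forces `φ v_k = u_k` and `φᵀ u_k = v_k`. Writing `φ = ∑ u_k v_kᵀ + W`, these say
`W v_k = 0` and `Wᵀ u_k = 0`, and then `‖φ‖ ≤ 1 ↔ ‖W‖ ≤ 1`, because the two summands act on
orthogonal components of the input and have orthogonal ranges.
-/

def IsOrthonormalFamily {ι m : Type*} [Fintype m] [DecidableEq ι] (u : ι → m → ℝ) : Prop :=
  ∀ k l, u k ⬝ᵥ u l = if k = l then 1 else 0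

section

variable {ι m n : Type*}

lemma dotProduct_self_nonneg [Fintype m] (x : m → ℝ) : 0 ≤ x ⬝ᵥ x :=
  Finset.sum_nonneg fun _ _ => mul_self_nonneg _

lemma dotProduct_le_sqrt_mul_sqrt [Fintype m] (x y : m → ℝ) : x ⬝ᵥ y ≤ √(x ⬝ᵥ x) * √(y ⬝ᵥ y) := by
  simpa [dotProduct, sq] using Real.sum_mul_le_sqrt_mul_sqrt Finset.univ x y

lemma dotProduct_sum_smul_of_pairwise [Fintype ι] [Fintype m] {g : ι → m → ℝ}
    (hg : Pairwise fun j l => g j ⬝ᵥ g l = 0) (c : ι → ℝ) (j : ι) :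
    g j ⬝ᵥ ∑ l, c l • g l = c j * (g j ⬝ᵥ g j) := by
  rw [dotProduct_sum, Finset.sum_eq_single j (fun l _ hlj => by rw [dotProduct_smul, hg hlj.symm,
    smul_zero]) (by simp), dotProduct_smul, smul_eq_mul]

lemma sum_smul_dotProduct_sum_smul_of_pairwise [Fintype ι] [Fintype m] {g : ι → m → ℝ}
    (hg : Pairwise fun j l => g j ⬝ᵥ g l = 0) (c : ι → ℝ) :
    (∑ j, c j • g j) ⬝ᵥ ∑ j, c j • g j = ∑ j, c j ^ 2 * (g j ⬝ᵥ g j) := by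
  simp only [sum_dotProduct, smul_dotProduct, dotProduct_sum_smul_of_pairwise hg, smul_eq_mul]
  exact Finset.sum_congr rfl fun j _ => by ring

lemma sum_vecMulVec_mulVec [Fintype ι] [Fintype n] (a : ι → m → ℝ) (w : ι → n → ℝ) (x : n → ℝ) :
    (∑ k, vecMulVec (a k) (w k)) *ᵥ x = ∑ k, (w k ⬝ᵥ x) • a k := by
  simp [sum_mulVec, vecMulVec_mulVec]

namespace IsOrthonormalFamily

variable [Fintype n] [DecidableEq ι] {v : ι → n → ℝ}

lemma dotProduct_self (hv : IsOrthonormalFamily v) (k : ι) : v k ⬝ᵥ v k = 1 := by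
  simpa using hv k k

lemma pairwise (hv : IsOrthonormalFamily v) : Pairwise fun j l => v j ⬝ᵥ v l = 0 :=
  fun j l hjl => by simpa [hjl] using hv j l

lemma dotProduct_sum_smul [Fintype ι] (hv : IsOrthonormalFamily v) (c : ι → ℝ) (l : ι) :
    v l ⬝ᵥ ∑ k, c k • v k = c l := by
  rw [dotProduct_sum_smul_of_pairwise hv.pairwise, hv.dotProduct_self, mul_one]

lemma sum_smul_dotProduct_sum_smul [Fintype ι] (hv : IsOrthonormalFamily v) (c : ι → ℝ) :
    (∑ k, c k • v k) ⬝ᵥ ∑ k, c k • v k = ∑ k, c k ^ 2 := by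
  simp [sum_smul_dotProduct_sum_smul_of_pairwise hv.pairwise, hv.dotProduct_self]

lemma sum_vecMulVec_mulVec_self [Fintype ι] (hv : IsOrthonormalFamily v) (a : ι → m → ℝ) (l : ι) :
    (∑ k, vecMulVec (a k) (v k)) *ᵥ v l = a l := by
  simp [_root_.sum_vecMulVec_mulVec, hv _ l]

lemma dotProduct_sub_sum_smul [Fintype ι] (hv : IsOrthonormalFamily v) (x : n → ℝ) (l : ι) :
    v l ⬝ᵥ (x - ∑ k, (v k ⬝ᵥ x) • v k) = 0 := by
  rw [dotProduct_sub, hv.dotProduct_sum_smul, sub_self]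

lemma dotProduct_self_eq [Fintype ι] (hv : IsOrthonormalFamily v) (x : n → ℝ) :
    x ⬝ᵥ x = ∑ k, (v k ⬝ᵥ x) ^ 2 +
      (x - ∑ k, (v k ⬝ᵥ x) • v k) ⬝ᵥ (x - ∑ k, (v k ⬝ᵥ x) • v k) := by
  have hp : (∑ k, (v k ⬝ᵥ x) • v k) ⬝ᵥ (x - ∑ k, (v k ⬝ᵥ x) • v k) = 0 := by
    simp only [sum_dotProduct, smul_dotProduct, hv.dotProduct_sub_sum_smul, smul_zero,
      Finset.sum_const_zero]
  rw [← hv.sum_smul_dotProduct_sum_smul]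
  generalize ∑ k, (v k ⬝ᵥ x) • v k = p at hp ⊢
  nth_rewrite 1 2 [show x = p + (x - p) by abel]
  simp only [add_dotProduct, dotProduct_add, hp, dotProduct_comm (x - p) p]
  ring

end IsOrthonormalFamily

end

lemma OrthonormalBasis.sum_dotProduct_mul_dotProduct {ι n : Type*} [Fintype ι] [Fintype n]
    (b : OrthonormalBasis ι ℝ (EuclideanSpace ℝ n)) (x y : n → ℝ) :
    ∑ j, (x ⬝ᵥ (b j).ofLp) * ((b j).ofLp ⬝ᵥ y) = x ⬝ᵥ y := by
  simpa [EuclideanSpace.inner_eq_star_dotProduct, dotProduct_comm] using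
    b.sum_inner_mul_inner (WithLp.toLp 2 x) (WithLp.toLp 2 y)

lemma OrthonormalBasis.isOrthonormalFamily {ι n : Type*} [Fintype ι] [Fintype n] [DecidableEq ι]
    (b : OrthonormalBasis ι ℝ (EuclideanSpace ℝ n)) :
    IsOrthonormalFamily fun j => (b j).ofLp := fun j l => by
  simpa [EuclideanSpace.inner_eq_star_dotProduct, dotProduct_comm] using
    orthonormal_iff_ite.1 b.orthonormal j l

section SpectralNorm

lemma EuclideanSpace.real_norm_sq_eq_dotProduct {k : Type*} [Fintype k]
    (x : EuclideanSpace ℝ k) : ‖x‖ ^ 2 = x.ofLp ⬝ᵥ x.ofLp := by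
  rw [EuclideanSpace.real_norm_sq_eq]
  simp [dotProduct, sq]

variable {m n : Type*} [Fintype m] [Fintype n] [DecidableEq n]

lemma matSpectralNorm_le_one_iff {Z : Matrix m n ℝ} :
    matSpectralNorm Z ≤ 1 ↔ ∀ x, (Z *ᵥ x) ⬝ᵥ (Z *ᵥ x) ≤ x ⬝ᵥ x := by
  set T := LinearMap.toContinuousLinearMap (toEuclideanLin Z)
  have hT : ∀ x : EuclideanSpace ℝ n, ‖T x‖ ^ 2 = (Z *ᵥ x.ofLp) ⬝ᵥ (Z *ᵥ x.ofLp) := fun x =>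
    EuclideanSpace.real_norm_sq_eq_dotProduct (T x)
  constructor
  · intro h x
    have := T.le_of_opNorm_le h (WithLp.toLp 2 x)
    rw [one_mul] at this
    have := pow_le_pow_left₀ (norm_nonneg _) this 2
    rwa [hT, EuclideanSpace.real_norm_sq_eq_dotProduct] at this
  · intro h
    refine T.opNorm_le_bound zero_le_one fun x => ?_
    rw [one_mul, ← pow_le_pow_iff_left₀ (norm_nonneg _) (norm_nonneg _) two_ne_zero, hT,
      EuclideanSpace.real_norm_sq_eq_dotProduct]
    exact h x

open scoped Matrix.Norms.L2Operator in
lemma matSpectralNorm_transpose [DecidableEq m] (Z : Matrix m n ℝ) :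
    matSpectralNorm Zᵀ = matSpectralNorm Z :=
  Matrix.l2_opNorm_conjTranspose Z

lemma dotProduct_mulVec_le_sqrt_mul_sqrt {Z : Matrix m n ℝ} (hZ : matSpectralNorm Z ≤ 1)
    (x : m → ℝ) (y : n → ℝ) : x ⬝ᵥ (Z *ᵥ y) ≤ √(x ⬝ᵥ x) * √(y ⬝ᵥ y) :=
  (dotProduct_le_sqrt_mul_sqrt x _).trans <| mul_le_mul_of_nonneg_left
    (Real.sqrt_le_sqrt (matSpectralNorm_le_one_iff.1 hZ y)) (Real.sqrt_nonneg _)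

lemma dotProduct_mulVec_le_one {Z : Matrix m n ℝ} (hZ : matSpectralNorm Z ≤ 1) {x : m → ℝ}
    {y : n → ℝ} (hx : x ⬝ᵥ x = 1) (hy : y ⬝ᵥ y = 1) : x ⬝ᵥ (Z *ᵥ y) ≤ 1 := by
  simpa [hx, hy] using dotProduct_mulVec_le_sqrt_mul_sqrt hZ x y

lemma mulVec_eq_of_dotProduct_mulVec_eq_one {Z : Matrix m n ℝ} (hZ : matSpectralNorm Z ≤ 1)
    {x : m → ℝ} {y : n → ℝ} (hx : x ⬝ᵥ x = 1) (hy : y ⬝ᵥ y = 1) (h : x ⬝ᵥ (Z *ᵥ y) = 1) :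
    Z *ᵥ y = x := by
  have hZy := matSpectralNorm_le_one_iff.1 hZ y
  have hdist : (Z *ᵥ y - x) ⬝ᵥ (Z *ᵥ y - x) = 0 := by
    refine le_antisymm ?_ (dotProduct_self_nonneg _)
    simp only [sub_dotProduct, dotProduct_sub, dotProduct_comm (Z *ᵥ y) x]
    linarith
  exact sub_eq_zero.1 (dotProduct_self_eq_zero.1 hdist)

end SpectralNorm

section Frobenius

variable {ι m n : Type*} [Fintype m] [Fintype n]

lemma frobInner_comm (Z Y : Matrix m n ℝ) : frobInner Z Y = frobInner Y Z := by
  simp [frobInner, mul_comm]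

lemma frobInner_zero_right (Z : Matrix m n ℝ) : frobInner Z 0 = 0 := by
  simp [frobInner]

lemma frobInner_add_right (Z X Y : Matrix m n ℝ) :
    frobInner Z (X + Y) = frobInner Z X + frobInner Z Y := by
  simp [frobInner, mul_add, Finset.sum_add_distrib]

lemma frobInner_sub_right (Z X Y : Matrix m n ℝ) :
    frobInner Z (X - Y) = frobInner Z X - frobInner Z Y := by
  simp [frobInner, mul_sub, Finset.sum_sub_distrib]

lemma frobInner_sum_right [Fintype ι] (Z : Matrix m n ℝ) (Y : ι → Matrix m n ℝ) :
    frobInner Z (∑ k, Y k) = ∑ k, frobInner Z (Y k) := by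
  simp only [frobInner, Matrix.sum_apply, Finset.mul_sum]
  exact (Finset.sum_congr rfl fun _ _ => Finset.sum_comm).trans Finset.sum_comm

lemma frobInner_smul_right (Z Y : Matrix m n ℝ) (c : ℝ) :
    frobInner Z (c • Y) = c * frobInner Z Y := by
  simp [frobInner, Finset.mul_sum, mul_left_comm]

lemma frobInner_vecMulVec_right (Z : Matrix m n ℝ) (x : m → ℝ) (y : n → ℝ) :
    frobInner Z (vecMulVec x y) = x ⬝ᵥ (Z *ᵥ y) := by
  simp [frobInner, vecMulVec_apply, dotProduct, mulVec, Finset.mul_sum, mul_left_comm]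

lemma frobInner_sum_smul_vecMulVec [Fintype ι] (Z : Matrix m n ℝ) (c : ι → ℝ)
    (a : ι → m → ℝ) (w : ι → n → ℝ) :
    frobInner Z (∑ k, c k • vecMulVec (a k) (w k)) = ∑ k, c k * (a k ⬝ᵥ (Z *ᵥ w k)) := by
  simp only [frobInner_sum_right, frobInner_smul_right, frobInner_vecMulVec_right]

lemma frobInner_eq_sum_dotProduct [Fintype ι] (b : OrthonormalBasis ι ℝ (EuclideanSpace ℝ n))
    (Z Y : Matrix m n ℝ) : frobInner Z Y = ∑ j, (Z *ᵥ (b j).ofLp) ⬝ᵥ (Y *ᵥ (b j).ofLp) := by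
  calc frobInner Z Y = ∑ i, Z i ⬝ᵥ Y i := rfl
    _ = ∑ i, ∑ j, (Z i ⬝ᵥ (b j).ofLp) * (Y i ⬝ᵥ (b j).ofLp) := by
      simp only [dotProduct_comm (Y _), b.sum_dotProduct_mul_dotProduct]
    _ = _ := Finset.sum_comm

end Frobenius

section NuclearNorm

variable {ι m n : Type*} [Fintype m] [Fintype n]

lemma mulVec_dotProduct_mulVec_of_eigen [Fintype ι] [DecidableEq ι] {Y : Matrix m n ℝ}
    {b : ι → n → ℝ} (hb : IsOrthonormalFamily b) {μ : ι → ℝ}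
    (hμ : ∀ j, (Yᵀ * Y) *ᵥ b j = μ j • b j) (j l : ι) :
    (Y *ᵥ b j) ⬝ᵥ (Y *ᵥ b l) = if j = l then μ j else 0 := by
  rw [dotProduct_mulVec, ← mulVec_transpose, mulVec_mulVec, hμ, smul_dotProduct, hb j l]
  simp

variable [DecidableEq n]

lemma frobInner_le_nuclearNorm {Z : Matrix m n ℝ} (hZ : matSpectralNorm Z ≤ 1)
    (Y : Matrix m n ℝ) : frobInner Z Y ≤ nuclearNorm Y := by
  set hY := isHermitian_transpose_mul_self Y
  set b := hY.eigenvectorBasis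
  have hb := b.isOrthonormalFamily
  have hYb := mulVec_dotProduct_mulVec_of_eigen hb hY.mulVec_eigenvectorBasis
  rw [frobInner_eq_sum_dotProduct b, nuclearNorm]
  gcongr with j
  calc (Z *ᵥ (b j).ofLp) ⬝ᵥ (Y *ᵥ (b j).ofLp) = (Y *ᵥ (b j).ofLp) ⬝ᵥ (Z *ᵥ (b j).ofLp) :=
        dotProduct_comm _ _
    _ ≤ √((Y *ᵥ (b j).ofLp) ⬝ᵥ (Y *ᵥ (b j).ofLp)) * √((b j).ofLp ⬝ᵥ (b j).ofLp) :=
        dotProduct_mulVec_le_sqrt_mul_sqrt hZ _ _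
    _ = √(hY.eigenvalues j) := by simp [hYb, hb.dotProduct_self]

lemma exists_frobInner_eq_nuclearNorm (Y : Matrix m n ℝ) :
    ∃ Z : Matrix m n ℝ, matSpectralNorm Z ≤ 1 ∧ frobInner Z Y = nuclearNorm Y := by
  set hY := isHermitian_transpose_mul_self Y
  set b := hY.eigenvectorBasis
  have hYb := mulVec_dotProduct_mulVec_of_eigen b.isOrthonormalFamily hY.mulVec_eigenvectorBasis
  have hμ : ∀ j, 0 ≤ hY.eigenvalues j := fun j => by
    simpa [hYb] using dotProduct_self_nonneg (Y *ᵥ (b j).ofLp)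
  -- The polar factor of `Y`: it sends `b j` to the unit vector along `Y b j`, or to `0` when
  -- `Y b j = 0` (then the eigenvalue is `0` and `(√0)⁻¹ = 0`).
  set g : n → m → ℝ := fun j => (√(hY.eigenvalues j))⁻¹ • (Y *ᵥ (b j).ofLp)
  have hg : Pairwise fun j l => g j ⬝ᵥ g l = 0 := fun j l hjl => by
    simp [g, smul_dotProduct, dotProduct_smul, hYb, hjl]
  have hgg : ∀ j, g j ⬝ᵥ g j ≤ 1 := fun j => by
    have : g j ⬝ᵥ g j = (hY.eigenvalues j)⁻¹ * hY.eigenvalues j := by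
      simp [g, smul_dotProduct, dotProduct_smul, hYb, ← mul_assoc, ← mul_inv,
        Real.mul_self_sqrt (hμ j)]
    rcases (hμ j).eq_or_lt with h | h
    · simp [this, ← h]
    · rw [this, inv_mul_cancel₀ h.ne']
  refine ⟨∑ j, vecMulVec (g j) (b j).ofLp, matSpectralNorm_le_one_iff.2 fun x => ?_, ?_⟩
  · rw [sum_vecMulVec_mulVec, sum_smul_dotProduct_sum_smul_of_pairwise hg,
      ← b.sum_dotProduct_mul_dotProduct x x]
    refine Finset.sum_le_sum fun j _ => ?_
    rw [dotProduct_comm x, ← sq]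
    exact mul_le_of_le_one_right (sq_nonneg _) (hgg j)
  · rw [frobInner_comm, frobInner_sum_right, nuclearNorm]
    refine Finset.sum_congr rfl fun j _ => ?_
    rw [frobInner_vecMulVec_right, smul_dotProduct, hYb, if_pos rfl, smul_eq_mul,
      ← div_eq_inv_mul, Real.div_sqrt]

lemma nuclearNorm_zero : nuclearNorm (0 : Matrix m n ℝ) = 0 := by
  obtain ⟨Z, -, hZ⟩ := exists_frobInner_eq_nuclearNorm (0 : Matrix m n ℝ)
  rw [← hZ, frobInner_zero_right]

lemma nuclearNorm_add_le (X Y : Matrix m n ℝ) :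
    nuclearNorm (X + Y) ≤ nuclearNorm X + nuclearNorm Y := by
  obtain ⟨Z, hZ, hZXY⟩ := exists_frobInner_eq_nuclearNorm (X + Y)
  rw [← hZXY, frobInner_add_right]
  exact add_le_add (frobInner_le_nuclearNorm hZ X) (frobInner_le_nuclearNorm hZ Y)

lemma nuclearNorm_vecMulVec_le (x : m → ℝ) (y : n → ℝ) :
    nuclearNorm (vecMulVec x y) ≤ √(x ⬝ᵥ x) * √(y ⬝ᵥ y) := by
  obtain ⟨Z, hZ, hZxy⟩ := exists_frobInner_eq_nuclearNorm (vecMulVec x y)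
  rw [← hZxy, frobInner_vecMulVec_right]
  exact dotProduct_mulVec_le_sqrt_mul_sqrt hZ x y

lemma matSpectralNorm_le_one_of_forall_frobInner_le {φ : Matrix m n ℝ}
    (h : ∀ Y, frobInner φ Y ≤ nuclearNorm Y) : matSpectralNorm φ ≤ 1 := by
  refine matSpectralNorm_le_one_iff.2 fun x => ?_
  have hx := (h (vecMulVec (φ *ᵥ x) x)).trans (nuclearNorm_vecMulVec_le _ x)
  rw [frobInner_vecMulVec_right] at hx
  have hφx := Real.mul_self_sqrt (dotProduct_self_nonneg (φ *ᵥ x))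
  have hsqrt : √((φ *ᵥ x) ⬝ᵥ (φ *ᵥ x)) ≤ √(x ⬝ᵥ x) := by
    by_contra! hlt
    nlinarith [Real.sqrt_nonneg (x ⬝ᵥ x)]
  exact (Real.sqrt_le_sqrt_iff (dotProduct_self_nonneg x)).1 hsqrt

lemma forall_frobInner_sub_le_nuclearNorm_sub_iff (A φ : Matrix m n ℝ) :
    (∀ Y, nuclearNorm Y - nuclearNorm A ≥ frobInner φ (Y - A)) ↔
      matSpectralNorm φ ≤ 1 ∧ frobInner φ A = nuclearNorm A := by
  constructor
  · intro h
    have hφ : matSpectralNorm φ ≤ 1 := by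
      refine matSpectralNorm_le_one_of_forall_frobInner_le fun Y => ?_
      have := h (A + Y)
      rw [add_sub_cancel_left] at this
      linarith [nuclearNorm_add_le A Y]
    refine ⟨hφ, le_antisymm (frobInner_le_nuclearNorm hφ A) ?_⟩
    have := h 0
    rw [nuclearNorm_zero, frobInner_sub_right, frobInner_zero_right] at this
    linarith
  · rintro ⟨hφ, hφA⟩ Y
    rw [frobInner_sub_right, hφA]
    linarith [frobInner_le_nuclearNorm hφ Y]

end NuclearNorm

section SingularValueDecomposition

variable {ι m n : Type*} [Fintype ι] [DecidableEq ι] [Fintype m] [Fintype n] [DecidableEq n]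
  {u : ι → m → ℝ} {v : ι → n → ℝ}

/-- `W` only sees the component of `x` orthogonal to the `v k`, while `∑ k, u k v kᵀ` maps the
other component isometrically onto a space orthogonal to the range of `W`. -/
lemma matSpectralNorm_sum_vecMulVec_add_le_one_iff (hu : IsOrthonormalFamily u)
    (hv : IsOrthonormalFamily v) {W : Matrix m n ℝ} (hWu : ∀ k, Wᵀ *ᵥ u k = 0)
    (hWv : ∀ k, W *ᵥ v k = 0) :
    matSpectralNorm (∑ k, vecMulVec (u k) (v k) + W) ≤ 1 ↔ matSpectralNorm W ≤ 1 := by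
  have hW_sub : ∀ x, W *ᵥ (x - ∑ k, (v k ⬝ᵥ x) • v k) = W *ᵥ x := fun x => by
    simp [mulVec_sub, mulVec_sum, mulVec_smul, hWv]
  have hnorm : ∀ x, ((∑ k, vecMulVec (u k) (v k) + W) *ᵥ x) ⬝ᵥ
      ((∑ k, vecMulVec (u k) (v k) + W) *ᵥ x) =
        ∑ k, (v k ⬝ᵥ x) ^ 2 + (W *ᵥ x) ⬝ᵥ (W *ᵥ x) := fun x => by
    have hcross : (∑ k, (v k ⬝ᵥ x) • u k) ⬝ᵥ (W *ᵥ x) = 0 := by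
      simp [dotProduct_mulVec, ← mulVec_transpose, mulVec_sum, mulVec_smul, hWu]
    rw [add_mulVec, sum_vecMulVec_mulVec, add_dotProduct, dotProduct_add, dotProduct_add,
      hu.sum_smul_dotProduct_sum_smul, hcross, dotProduct_comm (W *ᵥ x), hcross]
    ring
  rw [matSpectralNorm_le_one_iff, matSpectralNorm_le_one_iff]
  constructor
  · intro h x
    have hy := h (x - ∑ k, (v k ⬝ᵥ x) • v k)
    rw [hnorm, hW_sub, Finset.sum_eq_zero fun k _ => by simp [hv.dotProduct_sub_sum_smul],
      zero_add] at hy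
    have hsq : 0 ≤ ∑ k, (v k ⬝ᵥ x) ^ 2 := Finset.sum_nonneg fun k _ => sq_nonneg _
    linarith [hv.dotProduct_self_eq x]
  · intro h x
    rw [hnorm, ← hW_sub, hv.dotProduct_self_eq x]
    gcongr
    exact h _

lemma nuclearNorm_sum_smul_vecMulVec (hu : IsOrthonormalFamily u) (hv : IsOrthonormalFamily v)
    {σ : ι → ℝ} (hσ : ∀ k, 0 ≤ σ k) :
    nuclearNorm (∑ k, σ k • vecMulVec (u k) (v k)) = ∑ k, σ k := by
  refine le_antisymm ?_ ?_
  · obtain ⟨Z, hZ, hZA⟩ := exists_frobInner_eq_nuclearNorm (∑ k, σ k • vecMulVec (u k) (v k))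
    rw [← hZA, frobInner_sum_smul_vecMulVec]
    exact Finset.sum_le_sum fun k _ => mul_le_of_le_one_right (hσ k)
      (dotProduct_mulVec_le_one hZ (hu.dotProduct_self k) (hv.dotProduct_self k))
  · have hUV : matSpectralNorm (∑ k, vecMulVec (u k) (v k)) ≤ 1 := by
      simpa using (matSpectralNorm_sum_vecMulVec_add_le_one_iff hu hv (W := 0) (by simp)
        (by simp)).2 (by simp [matSpectralNorm])
    calc ∑ k, σ k
        = frobInner (∑ k, vecMulVec (u k) (v k)) (∑ k, σ k • vecMulVec (u k) (v k)) := by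
          simp [frobInner_sum_smul_vecMulVec, hv.sum_vecMulVec_mulVec_self, hu.dotProduct_self]
      _ ≤ _ := frobInner_le_nuclearNorm hUV _

lemma dotProduct_mulVec_eq_one_of_frobInner_eq (hu : IsOrthonormalFamily u)
    (hv : IsOrthonormalFamily v) {σ : ι → ℝ} (hσ : ∀ k, 0 < σ k) {Z : Matrix m n ℝ}
    (hZ : matSpectralNorm Z ≤ 1)
    (h : frobInner Z (∑ k, σ k • vecMulVec (u k) (v k)) = ∑ k, σ k) (k : ι) :
    u k ⬝ᵥ (Z *ᵥ v k) = 1 := by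
  rw [frobInner_sum_smul_vecMulVec, Finset.sum_eq_sum_iff_of_le fun k _ => mul_le_of_le_one_right
    (hσ k).le (dotProduct_mulVec_le_one hZ (hu.dotProduct_self k) (hv.dotProduct_self k))] at h
  exact (mul_eq_left₀ (hσ k).ne').1 (h k (Finset.mem_univ k))

end SingularValueDecomposition

theorem subdifferential_nuclearNorm_general
    (m n r : ℕ) (A : Matrix (Fin m) (Fin n) ℝ)
    (σ : Fin r → ℝ) (hσ : ∀ k, 0 < σ k)
    (u : Fin r → Fin m → ℝ) (v : Fin r → Fin n → ℝ)
    (hu : ∀ k l, u k ⬝ᵥ u l = if k = l then (1 : ℝ) else 0)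
    (hv : ∀ k l, v k ⬝ᵥ v l = if k = l then (1 : ℝ) else 0)
    (hA : A = ∑ k, σ k • Matrix.vecMulVec (u k) (v k))
    (φ : Matrix (Fin m) (Fin n) ℝ) :
    (∀ Y : Matrix (Fin m) (Fin n) ℝ,
        nuclearNorm Y - nuclearNorm A ≥ frobInner φ (Y - A)) ↔
    ∃ W : Matrix (Fin m) (Fin n) ℝ,
      matSpectralNorm W ≤ 1 ∧
      (∀ k, Wᵀ *ᵥ u k = 0 ∧ W *ᵥ v k = 0) ∧
      φ = (∑ k, Matrix.vecMulVec (u k) (v k)) + W := by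
  have hu : IsOrthonormalFamily u := hu
  have hv : IsOrthonormalFamily v := hv
  rw [forall_frobInner_sub_le_nuclearNorm_sub_iff, hA,
    nuclearNorm_sum_smul_vecMulVec hu hv fun k => (hσ k).le]
  constructor
  · rintro ⟨hφ, hφA⟩
    have huφv := dotProduct_mulVec_eq_one_of_frobInner_eq hu hv hσ hφ hφA
    have hφv k : φ *ᵥ v k = u k :=
      mulVec_eq_of_dotProduct_mulVec_eq_one hφ (hu.dotProduct_self k) (hv.dotProduct_self k)
        (huφv k)
    have hφu k : φᵀ *ᵥ u k = v k := by
      refine mulVec_eq_of_dotProduct_mulVec_eq_one (by rwa [matSpectralNorm_transpose])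
        (hv.dotProduct_self k) (hu.dotProduct_self k) ?_
      rw [mulVec_transpose, dotProduct_comm, ← dotProduct_mulVec, huφv]
    have hWu k : (φ - ∑ k, vecMulVec (u k) (v k))ᵀ *ᵥ u k = 0 := by
      simp [transpose_sum, transpose_vecMulVec, sub_mulVec, hφu, hu.sum_vecMulVec_mulVec_self]
    have hWv k : (φ - ∑ k, vecMulVec (u k) (v k)) *ᵥ v k = 0 := by
      simp [sub_mulVec, hφv, hv.sum_vecMulVec_mulVec_self]
    refine ⟨_, ?_, fun k => ⟨hWu k, hWv k⟩, (add_sub_cancel _ _).symm⟩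
    rwa [← matSpectralNorm_sum_vecMulVec_add_le_one_iff hu hv hWu hWv, add_sub_cancel]
  · rintro ⟨W, hW, hWuv, rfl⟩
    refine ⟨(matSpectralNorm_sum_vecMulVec_add_le_one_iff hu hv (fun k => (hWuv k).1)
      (fun k => (hWuv k).2)).2 hW, ?_⟩
    simp [frobInner_sum_smul_vecMulVec, add_mulVec, hv.sum_vecMulVec_mulVec_self, hWuv,
      hu.dotProduct_self]

/-- characterization of the subdifferential of the nuclear norm. If
`A = ∑ k, σ_k u_k v_kᵀ` is a singular value decomposition of a rank-`r` matrix `A`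
(`σ_k > 0`, the `u_k` and `v_k` orthonormal), then `φ` is a subgradient of `‖·‖_*` at `A`
iff `φ = ∑ k, u_k v_kᵀ + W` with `‖W‖ ≤ 1`, `Wᵀ u_k = 0` and `W v_k = 0` for all `k`. -/
theorem subdifferential_nuclearNorm
    (m n r : ℕ) (A : Matrix (Fin m) (Fin n) ℝ)
    (σ : Fin r → ℝ) (hσ : ∀ k, 0 < σ k)
    (u : Fin r → Fin m → ℝ) (v : Fin r → Fin n → ℝ)
    (hu : ∀ k l, u k ⬝ᵥ u l = if k = l then (1 : ℝ) else 0)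
    (hv : ∀ k l, v k ⬝ᵥ v l = if k = l then (1 : ℝ) else 0)
    (hA : A = ∑ k, σ k • Matrix.vecMulVec (u k) (v k))
    (hrank : A.rank = r)
    (φ : Matrix (Fin m) (Fin n) ℝ) :
    (∀ Y : Matrix (Fin m) (Fin n) ℝ,
        nuclearNorm Y - nuclearNorm A ≥ frobInner φ (Y - A)) ↔
    ∃ W : Matrix (Fin m) (Fin n) ℝ,
      matSpectralNorm W ≤ 1 ∧
      (∀ k, Wᵀ *ᵥ u k = 0 ∧ W *ᵥ v k = 0) ∧
      φ = (∑ k, Matrix.vecMulVec (u k) (v k)) + W :=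
  subdifferential_nuclearNorm_general m n r A σ hσ u v hu hv hA φ
end

section
/- Let G = (V, E_G) be an undirected graph on N nodes and let V* ⊆ V be the vertex set of an n-node clique of G (n ≥ 1), with characteristic vector v̄ ∈ R^V, and let X* = v̄ v̄ᵀ. Suppose there exist W ∈ R^{V×V}, λ ∈ R^{V×V}, and μ ≥ 0 such that W v̄ = 0, v̄ᵀ W = 0, ‖W‖ ≤ 1, and v̄ v̄ᵀ/n + W = μ e eᵀ + Σ_{(i,j) ∈ Ẽ} λ_{ij} e_i e_jᵀ, where Ẽ is the set of pairs (i,j) with i ≠ j and (i,j) ∉ E_G. Then X* is an optimal solution of the clique relaxation (C), and V* is a maximum clique of G. If moreover ‖W‖ < 1 and μ > 0, then X* is the unique optimal solution of (C) and V* is the unique maximum clique of G. -/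
open Matrix

/-- The characteristic vector of a finite set of indices. -/
def charVec {ι : Type*} [DecidableEq ι] (S : Finset ι) : ι → ℝ :=
  fun i => if i ∈ S then 1 else 0

/-- Feasibility for the clique relaxation (C): `∑_{i,j} X_{ij} ≥ n²` and `X_{ij} = 0` for
distinct non-adjacent `i, j`. -/
def FeasC {V : Type*} [Fintype V] (G : SimpleGraph V) (n : ℕ)
    (X : Matrix V V ℝ) : Prop :=
  ((n : ℝ) ^ 2 ≤ ∑ i, ∑ j, X i j) ∧ ∀ i j, i ≠ j → ¬G.Adj i j → X i j = 0

/-!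
Put `v = charVec Vstar`, `P = v vᵀ / n` and `Y = P + W`. Since `W` kills `v` on both sides,
`‖Y‖ ≤ 1`, so `tr (Yᵀ X) ≤ ‖X‖_*` for every `X`. On the feasible set of (C) the multiplier
equation turns `tr (Yᵀ X)` into `μ ∑ X_ij ≥ μ n²`, and testing it on `v vᵀ` gives `μ n² = n`; as
`‖v vᵀ‖_* = n`, this is optimality. A clique `S` yields the feasible point `(n/|S|)² v_S v_Sᵀ` of
nuclear norm `n²/|S|`, hence `|S| ≤ n`.

For uniqueness pick `‖W‖ < t < 1` and split `Y = (1 - t) P + t (P + W/t)`, where again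
`‖P + W/t‖ ≤ 1`. An optimal `X` then has `‖X‖_* ≤ tr (Pᵀ X) = vᵀ X v / n`; together with
`‖X‖_F ≤ ‖X‖_*` this makes `‖X - (‖X‖_* / n) v vᵀ‖_F² ≤ 0`.
-/

open scoped Matrix.Norms.L2Operator

variable {m n : Type*} [Fintype m] [Fintype n]

lemma matSpectralNorm_eq_norm [DecidableEq n] (A : Matrix m n ℝ) : matSpectralNorm A = ‖A‖ :=
  rfl

lemma trace_transpose_mul_eq_sum (Y X : Matrix m n ℝ) :
    (Yᵀ * X).trace = ∑ i, ∑ j, Y i j * X i j := by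
  simp only [trace, diag, mul_apply, transpose_apply]
  exact Finset.sum_comm

lemma dotProduct_self_pos {c : n → ℝ} (hc : c ≠ 0) : 0 < c ⬝ᵥ c := by
  simpa using dotProduct_star_self_pos_iff.2 hc

lemma EuclideanSpace.norm_eq_sqrt_dotProduct (x : EuclideanSpace ℝ n) :
    ‖x‖ = √(x.ofLp ⬝ᵥ x.ofLp) := by
  simp [EuclideanSpace.norm_eq, dotProduct, sq]

lemma OrthonormalBasis.dotProduct_self_eq_one (b : OrthonormalBasis n ℝ (EuclideanSpace ℝ n))
    (k : n) : ⇑(b k) ⬝ᵥ ⇑(b k) = 1 := by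
  have h := b.orthonormal.1 k
  rwa [EuclideanSpace.norm_eq_sqrt_dotProduct, Real.sqrt_eq_one] at h

lemma trace_eq_sum_dotProduct [DecidableEq n] (b : OrthonormalBasis n ℝ (EuclideanSpace ℝ n))
    (M : Matrix n n ℝ) : M.trace = ∑ k, ⇑(b k) ⬝ᵥ (M *ᵥ ⇑(b k)) := by
  have := LinearMap.trace_eq_sum_inner
    (Matrix.toLin (PiLp.basisFun 2 ℝ n) (PiLp.basisFun 2 ℝ n) M) b
  rw [LinearMap.trace_eq_matrix_trace ℝ (PiLp.basisFun _ _ _), LinearMap.toMatrix_toLin,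
    ← toLpLin_eq_toLin] at this
  simp [this, toLpLin_apply, PiLp.inner_apply, dotProduct, mul_comm]

lemma dotProduct_mulVec_mulVec (Y X : Matrix m n ℝ) (v : n → ℝ) :
    (Y *ᵥ v) ⬝ᵥ (X *ᵥ v) = v ⬝ᵥ ((Yᵀ * X) *ᵥ v) := by
  conv_rhs => rw [← mulVec_mulVec, dotProduct_mulVec, vecMul_transpose]

lemma trace_transpose_mul_eq_sum_dotProduct [DecidableEq n]
    (b : OrthonormalBasis n ℝ (EuclideanSpace ℝ n)) (Y X : Matrix m n ℝ) :
    (Yᵀ * X).trace = ∑ k, (Y *ᵥ ⇑(b k)) ⬝ᵥ (X *ᵥ ⇑(b k)) := by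
  simp only [trace_eq_sum_dotProduct b, dotProduct_mulVec_mulVec]

lemma dotProduct_mulVec_mulVec_le [DecidableEq n] (Y X : Matrix m n ℝ)
    (v : EuclideanSpace ℝ n) :
    (Y *ᵥ v) ⬝ᵥ (X *ᵥ v) ≤ ‖Y‖ * ‖v‖ * √((X *ᵥ v) ⬝ᵥ (X *ᵥ v)) := by
  calc (Y *ᵥ v) ⬝ᵥ (X *ᵥ v)
      ≤ ‖WithLp.toLp 2 (Y *ᵥ v)‖ * ‖WithLp.toLp 2 (X *ᵥ v)‖ := by
        simpa [PiLp.inner_apply, dotProduct, mul_comm] using real_inner_le_norm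
          (WithLp.toLp 2 (Y *ᵥ v)) (WithLp.toLp 2 (X *ᵥ v))
    _ ≤ ‖Y‖ * ‖v‖ * √((X *ᵥ v) ⬝ᵥ (X *ᵥ v)) := by
        rw [EuclideanSpace.norm_eq_sqrt_dotProduct (WithLp.toLp 2 (X *ᵥ v)), WithLp.ofLp_toLp]
        gcongr
        exact Y.l2_opNorm_mulVec v

lemma dotProduct_self_mulVec_eigenvectorBasis [DecidableEq n] (X : Matrix m n ℝ)
    (hX : (Xᵀ * X).IsHermitian) (k : n) :
    (X *ᵥ ⇑(hX.eigenvectorBasis k)) ⬝ᵥ (X *ᵥ ⇑(hX.eigenvectorBasis k))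
      = hX.eigenvalues k := by
  rw [dotProduct_mulVec_mulVec, hX.mulVec_eigenvectorBasis, dotProduct_smul,
    OrthonormalBasis.dotProduct_self_eq_one, smul_eq_mul, mul_one]

lemma eigenvalues_transpose_mul_self_nonneg [DecidableEq n] (X : Matrix m n ℝ) (k : n) :
    0 ≤ (isHermitian_transpose_mul_self X).eigenvalues k :=
  eigenvalues_conjTranspose_mul_self_nonneg X k

lemma nuclearNorm_nonneg [DecidableEq n] (X : Matrix m n ℝ) : 0 ≤ nuclearNorm X :=
  Finset.sum_nonneg fun _ _ => Real.sqrt_nonneg _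

lemma trace_transpose_mul_le_norm_mul_nuclearNorm [DecidableEq n] (Y X : Matrix m n ℝ) :
    (Yᵀ * X).trace ≤ ‖Y‖ * nuclearNorm X := by
  rw [trace_transpose_mul_eq_sum_dotProduct (isHermitian_transpose_mul_self X).eigenvectorBasis,
    nuclearNorm, Finset.mul_sum]
  refine Finset.sum_le_sum fun k _ => ?_
  simpa [dotProduct_self_mulVec_eigenvectorBasis] using
    dotProduct_mulVec_mulVec_le Y X ((isHermitian_transpose_mul_self X).eigenvectorBasis k)

lemma trace_transpose_mul_le_nuclearNorm [DecidableEq n] {Y : Matrix m n ℝ} (hY : ‖Y‖ ≤ 1)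
    (X : Matrix m n ℝ) : (Yᵀ * X).trace ≤ nuclearNorm X :=
  (trace_transpose_mul_le_norm_mul_nuclearNorm Y X).trans
    (mul_le_of_le_one_left (nuclearNorm_nonneg X) hY)

lemma trace_transpose_mul_self_eq_sum_eigenvalues [DecidableEq n] (X : Matrix m n ℝ) :
    (Xᵀ * X).trace = ∑ k, (isHermitian_transpose_mul_self X).eigenvalues k := by
  simpa using (isHermitian_transpose_mul_self X).trace_eq_sum_eigenvalues

lemma sum_sq_le_nuclearNorm_sq [DecidableEq n] (X : Matrix m n ℝ) :
    ∑ i, ∑ j, X i j ^ 2 ≤ nuclearNorm X ^ 2 := by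
  calc ∑ i, ∑ j, X i j ^ 2
        = ∑ k, √((isHermitian_transpose_mul_self X).eigenvalues k) ^ 2 := by
        simp_rw [Real.sq_sqrt (eigenvalues_transpose_mul_self_nonneg X _), sq,
          ← trace_transpose_mul_eq_sum, trace_transpose_mul_self_eq_sum_eigenvalues]
    _ ≤ nuclearNorm X ^ 2 :=
        Finset.sum_sq_le_sq_sum_of_nonneg fun k _ => Real.sqrt_nonneg _

lemma nuclearNorm_eq_trace_of_mul_self_eq_smul [DecidableEq n] {X : Matrix n n ℝ} {s : ℝ}
    (hs : 0 < s) (hXt : Xᵀ = X) (hXX : X * X = s • X) : nuclearNorm X = X.trace := by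
  have hM : Xᵀ * X = s • X := by rw [hXt, hXX]
  have hsqrt : ∀ k, √((isHermitian_transpose_mul_self X).eigenvalues k)
      = (isHermitian_transpose_mul_self X).eigenvalues k / s := by
    intro k
    set b := (isHermitian_transpose_mul_self X).eigenvectorBasis
    set l := (isHermitian_transpose_mul_self X).eigenvalues k
    have hv : (Xᵀ * X) *ᵥ ⇑(b k) = l • ⇑(b k) :=
      (isHermitian_transpose_mul_self X).mulVec_eigenvectorBasis k
    -- `(XᵀX)² = s² XᵀX`, so every eigenvalue of `XᵀX` is `0` or `s²`
    have hMM : (Xᵀ * X) * (Xᵀ * X) = s ^ 2 • (Xᵀ * X) := by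
      rw [hM, smul_mul_smul, hXX, smul_smul, smul_smul]
      ring_nf
    have hl : l ^ 2 • ⇑(b k) = (s ^ 2 * l) • ⇑(b k) := by
      calc l ^ 2 • ⇑(b k) = (Xᵀ * X) *ᵥ ((Xᵀ * X) *ᵥ ⇑(b k)) := by
            rw [hv, mulVec_smul, hv, smul_smul, sq]
        _ = (s ^ 2 * l) • ⇑(b k) := by
            rw [mulVec_mulVec, hMM, smul_mulVec, hv, smul_smul]
    have hbk : ⇑(b k) ≠ 0 := (WithLp.ofLp_eq_zero 2).ne.2 (b.orthonormal.ne_zero k)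
    rcases mul_eq_zero.1 (show l * (l - s ^ 2) = 0 by
        linear_combination smul_left_injective ℝ hbk hl) with h | h
    · rw [h, Real.sqrt_zero, zero_div]
    · rw [sub_eq_zero.1 h, Real.sqrt_sq hs.le]
      field_simp
  rw [nuclearNorm, Finset.sum_congr rfl fun k _ => hsqrt k, ← Finset.sum_div,
    ← trace_transpose_mul_self_eq_sum_eigenvalues, hM, trace_smul, smul_eq_mul]
  field_simp

lemma sum_vecMulVec (a : m → ℝ) (b : n → ℝ) :
    ∑ i, ∑ j, vecMulVec a b i j = (∑ i, a i) * ∑ j, b j := by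
  simp only [vecMulVec_apply, Finset.sum_mul_sum]

lemma trace_transpose_vecMulVec_mul (c : n → ℝ) (X : Matrix n n ℝ) :
    ((vecMulVec c c)ᵀ * X).trace = c ⬝ᵥ (X *ᵥ c) := by
  rw [transpose_vecMulVec, vecMulVec_mul, trace_vecMulVec, dotProduct_mulVec, dotProduct_comm]

lemma nuclearNorm_vecMulVec_self [DecidableEq n] {c : n → ℝ} (hc : c ≠ 0) :
    nuclearNorm (vecMulVec c c) = c ⬝ᵥ c := by
  rw [nuclearNorm_eq_trace_of_mul_self_eq_smul (dotProduct_self_pos hc) (transpose_vecMulVec c c)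
    (by rw [vecMulVec_mul_vecMulVec, vecMulVec_smul]), trace_vecMulVec]

lemma norm_le_one_iff_forall_dotProduct_le [DecidableEq n] {A : Matrix m n ℝ} :
    ‖A‖ ≤ 1 ↔ ∀ x, (A *ᵥ x) ⬝ᵥ (A *ᵥ x) ≤ x ⬝ᵥ x := by
  constructor
  · intro hA x
    have h := (A.l2_opNorm_mulVec (WithLp.toLp 2 x)).trans
      (mul_le_of_le_one_left (norm_nonneg _) hA)
    simp only [EuclideanSpace.norm_eq_sqrt_dotProduct] at h
    exact (Real.sqrt_le_sqrt_iff (Finset.sum_nonneg fun i _ => mul_self_nonneg _)).1 h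
  · intro hA
    refine ContinuousLinearMap.opNorm_le_bound _ zero_le_one fun x => ?_
    rw [one_mul, EuclideanSpace.norm_eq_sqrt_dotProduct, EuclideanSpace.norm_eq_sqrt_dotProduct]
    exact Real.sqrt_le_sqrt (hA x.ofLp)

lemma norm_inv_smul_vecMulVec_add_le_one [DecidableEq n] (c : n → ℝ) {W : Matrix n n ℝ}
    (hWc : W *ᵥ c = 0) (hcW : c ᵥ* W = 0) (hW : ‖W‖ ≤ 1) :
    ‖(c ⬝ᵥ c)⁻¹ • vecMulVec c c + W‖ ≤ 1 := by
  rw [norm_le_one_iff_forall_dotProduct_le] at hW ⊢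
  intro x
  rcases eq_or_ne (c ⬝ᵥ c) 0 with hc | hc
  · simpa [dotProduct_self_eq_zero.1 hc] using hW x
  set α := (c ⬝ᵥ c)⁻¹ * (c ⬝ᵥ x)
  set u := x - α • c
  have hcu : c ⬝ᵥ u = 0 := by
    simp only [u, α, dotProduct_sub, dotProduct_smul, smul_eq_mul]
    field_simp
    ring
  have hcWu : c ⬝ᵥ (W *ᵥ u) = 0 := by rw [dotProduct_mulVec, hcW, zero_dotProduct]
  have hAx : ((c ⬝ᵥ c)⁻¹ • vecMulVec c c + W) *ᵥ x = α • c + W *ᵥ u := by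
    rw [add_mulVec, smul_mulVec, vecMulVec_mulVec]
    simp [u, mulVec_sub, mulVec_smul, hWc, α, smul_smul]
  have hx : x = α • c + u := by simp [u]
  rw [hAx]
  calc (α • c + W *ᵥ u) ⬝ᵥ (α • c + W *ᵥ u)
        = α ^ 2 * (c ⬝ᵥ c) + (W *ᵥ u) ⬝ᵥ (W *ᵥ u) := by
        simp only [add_dotProduct, dotProduct_add, smul_dotProduct, dotProduct_smul, smul_eq_mul,
          dotProduct_comm (W *ᵥ u) c, hcWu]
        ring
    _ ≤ α ^ 2 * (c ⬝ᵥ c) + u ⬝ᵥ u := by grw [hW u]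
    _ = x ⬝ᵥ x := by
        conv_rhs => rw [hx]
        simp only [add_dotProduct, dotProduct_add, smul_dotProduct, dotProduct_smul, smul_eq_mul,
          dotProduct_comm u c, hcu]
        ring

lemma eq_smul_vecMulVec_of_nuclearNorm_mul_le [DecidableEq n] {c : n → ℝ} (hc : c ≠ 0)
    {X : Matrix n n ℝ} (h : nuclearNorm X * (c ⬝ᵥ c) ≤ c ⬝ᵥ (X *ᵥ c)) :
    X = (nuclearNorm X / (c ⬝ᵥ c)) • vecMulVec c c := by
  have hs := dotProduct_self_pos hc
  have hN := nuclearNorm_nonneg X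
  set t := nuclearNorm X / (c ⬝ᵥ c)
  have ht : t * (c ⬝ᵥ c) = nuclearNorm X := div_mul_cancel₀ _ hs.ne'
  have hexpand : ∑ i, ∑ j, (X - t • vecMulVec c c) i j ^ 2
      = ∑ i, ∑ j, X i j ^ 2 - 2 * t * (c ⬝ᵥ (X *ᵥ c)) + t ^ 2 * (c ⬝ᵥ c) ^ 2 := by
    have hentry : ∀ i j, (X - t • vecMulVec c c) i j ^ 2
        = X i j ^ 2 - 2 * t * (c i * (X i j * c j)) + t ^ 2 * (c i * c i) * (c j * c j) :=
      fun i j => by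
        simp only [Matrix.sub_apply, Matrix.smul_apply, vecMulVec_apply, smul_eq_mul]
        ring
    simp only [hentry, Finset.sum_add_distrib, Finset.sum_sub_distrib, ← Finset.mul_sum,
      ← Finset.sum_mul, dotProduct, mulVec]
    ring
  have hzero : ∑ i, ∑ j, (X - t • vecMulVec c c) i j ^ 2 ≤ 0 := by
    have hF := sum_sq_le_nuclearNorm_sq X
    have hNt : nuclearNorm X ^ 2 ≤ t * (c ⬝ᵥ (X *ᵥ c)) := by
      calc nuclearNorm X ^ 2 = t * (nuclearNorm X * (c ⬝ᵥ c)) := by rw [← ht]; ring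
        _ ≤ t * (c ⬝ᵥ (X *ᵥ c)) := mul_le_mul_of_nonneg_left h (div_nonneg hN hs.le)
    rw [hexpand, ← mul_pow, ht]
    linarith
  have hsum : ∑ i, ∑ j, (X - t • vecMulVec c c) i j ^ 2 = 0 :=
    le_antisymm hzero (by positivity)
  ext i j
  rw [Finset.sum_eq_zero_iff_of_nonneg fun i _ => by positivity] at hsum
  have hij := (Finset.sum_eq_zero_iff_of_nonneg fun j _ => sq_nonneg _).1
    (hsum i (Finset.mem_univ i)) j (Finset.mem_univ j)
  exact sub_eq_zero.1 (pow_eq_zero_iff two_ne_zero |>.1 hij)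

lemma eq_smul_vecMulVec_of_nuclearNorm_le_trace [DecidableEq n] {c : n → ℝ} (hc : c ≠ 0)
    {W : Matrix n n ℝ} (hWc : W *ᵥ c = 0) (hcW : c ᵥ* W = 0) (hW : ‖W‖ < 1) {X : Matrix n n ℝ}
    (hX : nuclearNorm X ≤ (((c ⬝ᵥ c)⁻¹ • vecMulVec c c + W)ᵀ * X).trace) :
    X = (nuclearNorm X / (c ⬝ᵥ c)) • vecMulVec c c := by
  set t := (1 + ‖W‖) / 2
  have ht0 : 0 < t := by positivity
  have ht1 : t < 1 := by simp only [t]; linarith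
  have hWt : ‖t⁻¹ • W‖ ≤ 1 := by
    rw [norm_smul, Real.norm_of_nonneg (inv_nonneg.2 ht0.le), inv_mul_le_one₀ ht0]
    simp only [t]; linarith
  set P := (c ⬝ᵥ c)⁻¹ • vecMulVec c c with hP
  have hPX : (Pᵀ * X).trace = (c ⬝ᵥ c)⁻¹ * c ⬝ᵥ (X *ᵥ c) := by
    rw [hP, transpose_smul, smul_mul, trace_smul, trace_transpose_vecMulVec_mul, smul_eq_mul]
  have hdual : ((P + t⁻¹ • W)ᵀ * X).trace ≤ nuclearNorm X :=
    trace_transpose_mul_le_nuclearNorm (norm_inv_smul_vecMulVec_add_le_one c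
      (by rw [smul_mulVec, hWc, smul_zero]) (by rw [vecMul_smul, hcW, smul_zero]) hWt) X
  clear_value P
  have hsplit : ((P + W)ᵀ * X).trace
      = (1 - t) * (Pᵀ * X).trace + t * ((P + t⁻¹ • W)ᵀ * X).trace := by
    simp only [transpose_add, transpose_smul, add_mul, smul_mul, trace_add, trace_smul,
      smul_eq_mul]
    field_simp
    ring
  rw [hsplit, hPX] at hX
  refine eq_smul_vecMulVec_of_nuclearNorm_mul_le hc ?_
  rw [← le_div_iff₀ (dotProduct_self_pos hc), div_eq_inv_mul]
  have htdual := mul_le_mul_of_nonneg_left hdual ht0.le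
  exact le_of_mul_le_mul_left (by linarith) (sub_pos.2 ht1)

section CliqueRelaxation

variable {V : Type*} [DecidableEq V]

lemma charVec_ne_zero {S : Finset V} (hS : S.Nonempty) : charVec S ≠ 0 := by
  obtain ⟨i, hi⟩ := hS
  exact fun h => by simpa [charVec, hi] using congrFun h i

lemma eq_of_vecMulVec_charVec_eq {S T : Finset V}
    (h : vecMulVec (charVec S) (charVec S) = vecMulVec (charVec T) (charVec T)) : S = T := by
  ext i
  have := congrFun (congrFun h i) i
  by_cases hS : i ∈ S <;> by_cases hT : i ∈ T <;>
    simp [vecMulVec_apply, charVec, hS, hT] at this ⊢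

variable [Fintype V] {G : SimpleGraph V} {n : ℕ}

lemma charVec_dotProduct_self (S : Finset V) : charVec S ⬝ᵥ charVec S = S.card := by
  simp [dotProduct, charVec]

lemma sum_charVec (S : Finset V) : ∑ i, charVec S i = S.card := by
  simp [charVec]

lemma feasC_vecMulVec_smul_charVec {S : Finset V} (hS : G.IsClique (S : Set V)) {r : ℝ}
    (hr : r * S.card = n) : FeasC G n (vecMulVec (r • charVec S) (r • charVec S)) := by
  refine ⟨?_, fun i j hij hadj => ?_⟩
  · have hsum : ∑ i, (r • charVec S) i = n := by
      simp only [Pi.smul_apply, smul_eq_mul, ← Finset.mul_sum, sum_charVec, hr]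
    rw [sum_vecMulVec, hsum, sq]
  · by_cases hi : i ∈ S
    · by_cases hj : j ∈ S
      · exact absurd (hS hi hj hij) hadj
      · simp [vecMulVec_apply, charVec, hj]
    · simp [vecMulVec_apply, charVec, hi]

lemma card_le_of_forall_feasC_le_nuclearNorm (hn : 0 < n)
    (h : ∀ X, FeasC G n X → (n : ℝ) ≤ nuclearNorm X) {S : Finset V}
    (hS : G.IsClique (S : Set V)) : S.card ≤ n := by
  rcases S.eq_empty_or_nonempty with rfl | hne
  · simp
  have hcard : (0 : ℝ) < S.card := by exact_mod_cast hne.card_pos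
  have hnR : (0 : ℝ) < n := by exact_mod_cast hn
  set r := (n : ℝ) / S.card
  have hle := h _ (feasC_vecMulVec_smul_charVec hS (div_mul_cancel₀ _ hcard.ne'))
  rw [nuclearNorm_vecMulVec_self (smul_ne_zero (by positivity) (charVec_ne_zero hne)),
    smul_dotProduct, dotProduct_smul, charVec_dotProduct_self, smul_eq_mul, smul_eq_mul] at hle
  have : (n : ℝ) * S.card ≤ n * n := by
    calc (n : ℝ) * S.card ≤ r * (r * S.card) * S.card := by gcongr
      _ = n * n := by simp only [r]; field_simp
  exact_mod_cast le_of_mul_le_mul_left this hnR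

lemma eq_of_forall_feasC_nuclearNorm_le_eq (hn : 0 < n) {T : Finset V}
    (h : ∀ X, FeasC G n X → nuclearNorm X ≤ n → X = vecMulVec (charVec T) (charVec T))
    {S : Finset V} (hS : G.IsClique (S : Set V)) (hcard : S.card = n) : S = T := by
  have hne : S.Nonempty := Finset.card_pos.1 (hcard ▸ hn)
  have hfeas := feasC_vecMulVec_smul_charVec hS (r := 1) (by rw [one_mul, hcard])
  rw [one_smul] at hfeas
  refine eq_of_vecMulVec_charVec_eq (h _ hfeas ?_)
  rw [nuclearNorm_vecMulVec_self (charVec_ne_zero hne), charVec_dotProduct_self, hcard]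

lemma trace_transpose_mul_eq_of_eq_smul_ones_add {Y Λ X : Matrix V V ℝ} {μ : ℝ}
    (hΛ : ∀ i j, (i = j ∨ G.Adj i j) → Λ i j = 0)
    (heq : Y = μ • of (fun _ _ => (1 : ℝ)) + Λ)
    (hX : ∀ i j, i ≠ j → ¬G.Adj i j → X i j = 0) :
    (Yᵀ * X).trace = μ * ∑ i, ∑ j, X i j := by
  have hΛX : ∀ i j, Λ i j * X i j = 0 := fun i j => by
    by_cases h : i = j ∨ G.Adj i j
    · rw [hΛ i j h, zero_mul]
    · push Not at h
      rw [hX i j h.1 h.2, mul_zero]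
  simp [heq, trace_transpose_mul_eq_sum, add_mul, hΛX, Finset.mul_sum]

lemma le_trace_transpose_mul_of_feasC (hn : 0 < n) {Vstar : Finset V} (hcard : Vstar.card = n)
    (hclique : G.IsClique (Vstar : Set V)) {W Λ : Matrix V V ℝ} {μ : ℝ}
    (hWv : W *ᵥ charVec Vstar = 0) (hΛ : ∀ i j, (i = j ∨ G.Adj i j) → Λ i j = 0)
    (heq : (n : ℝ)⁻¹ • vecMulVec (charVec Vstar) (charVec Vstar) + W
      = μ • of (fun _ _ => (1 : ℝ)) + Λ) {X : Matrix V V ℝ} (hX : FeasC G n X) :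
    (n : ℝ) ≤ (((n : ℝ)⁻¹ • vecMulVec (charVec Vstar) (charVec Vstar) + W)ᵀ * X).trace := by
  set c := charVec Vstar
  have hnR : (0 : ℝ) < n := by exact_mod_cast hn
  have hcc : c ⬝ᵥ c = n := by rw [charVec_dotProduct_self, hcard]
  have hYc : ((n : ℝ)⁻¹ • vecMulVec c c + W) *ᵥ c = c := by
    rw [add_mulVec, smul_mulVec, vecMulVec_mulVec, hWv, hcc, op_smul_eq_smul, add_zero,
      inv_smul_smul₀ hnR.ne']
  have hμ : μ * n ^ 2 = n := by
    have hfeas := feasC_vecMulVec_smul_charVec hclique (r := 1) (by rw [one_mul, hcard])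
    rw [one_smul] at hfeas
    have h := trace_transpose_mul_eq_of_eq_smul_ones_add hΛ heq hfeas.2
    rw [← trace_transpose, transpose_mul, transpose_transpose, trace_transpose_vecMulVec_mul, hYc,
      hcc, sum_vecMulVec, sum_charVec, hcard] at h
    linear_combination -h
  rw [trace_transpose_mul_eq_of_eq_smul_ones_add hΛ heq hX.2]
  have hμ0 : 0 ≤ μ := by nlinarith
  calc (n : ℝ) = μ * n ^ 2 := hμ.symm
    _ ≤ μ * ∑ i, ∑ j, X i j := mul_le_mul_of_nonneg_left hX.1 hμ0

end CliqueRelaxation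

theorem clique_relaxation_optimality_general
    (V : Type) [Fintype V] [DecidableEq V]
    (G : SimpleGraph V) (Vstar : Finset V) (n : ℕ) (hn : 1 ≤ n)
    (hcard : Vstar.card = n)
    (hclique : G.IsClique (Vstar : Set V))
    (W Λ : Matrix V V ℝ) (μ : ℝ)
    (hWv : W *ᵥ charVec Vstar = 0)
    (hvW : charVec Vstar ᵥ* W = 0)
    (hWnorm : matSpectralNorm W ≤ 1)
    (hΛ : ∀ i j, (i = j ∨ G.Adj i j) → Λ i j = 0)
    (heq : ((n : ℝ))⁻¹ • vecMulVec (charVec Vstar) (charVec Vstar) + W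
         = μ • Matrix.of (fun _ _ => (1 : ℝ)) + Λ) :
    ((∀ X : Matrix V V ℝ, FeasC G n X →
        nuclearNorm X ≥ nuclearNorm (vecMulVec (charVec Vstar) (charVec Vstar))) ∧
     (∀ S : Finset V, G.IsClique (S : Set V) → S.card ≤ n)) ∧
    (matSpectralNorm W < 1 → 0 < μ →
      (∀ X : Matrix V V ℝ, FeasC G n X →
          X ≠ vecMulVec (charVec Vstar) (charVec Vstar) →
          nuclearNorm X > nuclearNorm (vecMulVec (charVec Vstar) (charVec Vstar))) ∧
      (∀ S : Finset V, G.IsClique (S : Set V) → n ≤ S.card → S = Vstar)) := by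
  rw [matSpectralNorm_eq_norm] at hWnorm ⊢
  set c := charVec Vstar
  have hcc : c ⬝ᵥ c = n := by rw [charVec_dotProduct_self, hcard]
  have hc : c ≠ 0 := charVec_ne_zero (Finset.card_pos.1 (hcard ▸ hn))
  have hstar : nuclearNorm (vecMulVec c c) = n := by rw [nuclearNorm_vecMulVec_self hc, hcc]
  have hdual :
      ∀ X, FeasC G n X → (n : ℝ) ≤ (((n : ℝ)⁻¹ • vecMulVec c c + W)ᵀ * X).trace :=
    fun X hX => le_trace_transpose_mul_of_feasC hn hcard hclique hWv hΛ heq hX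
  have hY : ‖(n : ℝ)⁻¹ • vecMulVec c c + W‖ ≤ 1 := by
    simpa [hcc] using norm_inv_smul_vecMulVec_add_le_one c hWv hvW hWnorm
  have hlow : ∀ X, FeasC G n X → (n : ℝ) ≤ nuclearNorm X := fun X hX =>
    (hdual X hX).trans (trace_transpose_mul_le_nuclearNorm hY X)
  have huniq : ‖W‖ < 1 →
      ∀ X, FeasC G n X → nuclearNorm X ≤ n → X = vecMulVec c c := fun hW X hX hle => by
    have hN : nuclearNorm X = n := le_antisymm hle (hlow X hX)
    have := eq_smul_vecMulVec_of_nuclearNorm_le_trace hc hWv hvW hW (X := X)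
      (by rw [hcc, hN]; exact hdual X hX)
    rwa [hN, hcc, div_self (by positivity), one_smul] at this
  refine ⟨⟨fun X hX => hstar ▸ hlow X hX,
    fun S hS => card_le_of_forall_feasC_le_nuclearNorm hn hlow hS⟩, fun hW _ => ⟨?_, ?_⟩⟩
  · exact fun X hX hne => lt_of_not_ge fun hle => hne (huniq hW X hX (hstar ▸ hle))
  · exact fun S hS hS' => eq_of_forall_feasC_nuclearNorm_le_eq hn (huniq hW) hS
      (le_antisymm (card_le_of_forall_feasC_le_nuclearNorm hn hlow hS) hS')

/-- KKT conditions for the clique relaxation. Under the stated multiplier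
conditions, `X* = v̄ v̄ᵀ` is optimal for (C) and `V*` is a maximum clique of `G`; if moreover
`‖W‖ < 1` and `μ > 0`, then `X*` is the unique optimizer of (C) and `V*` is the unique
maximum clique of `G`. -/
theorem clique_relaxation_optimality
    (V : Type) [Fintype V] [DecidableEq V] (N : ℕ) (hN : Fintype.card V = N)
    (G : SimpleGraph V) (Vstar : Finset V) (n : ℕ) (hn : 1 ≤ n)
    (hcard : Vstar.card = n)
    (hclique : G.IsClique (Vstar : Set V))
    (W Λ : Matrix V V ℝ) (μ : ℝ) (hμ : 0 ≤ μ)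
    (hWv : W *ᵥ charVec Vstar = 0)
    (hvW : charVec Vstar ᵥ* W = 0)
    (hWnorm : matSpectralNorm W ≤ 1)
    (hΛ : ∀ i j, (i = j ∨ G.Adj i j) → Λ i j = 0)
    (heq : ((n : ℝ))⁻¹ • vecMulVec (charVec Vstar) (charVec Vstar) + W
         = μ • Matrix.of (fun _ _ => (1 : ℝ)) + Λ) :
    ((∀ X : Matrix V V ℝ, FeasC G n X →
        nuclearNorm X ≥ nuclearNorm (vecMulVec (charVec Vstar) (charVec Vstar))) ∧
     (∀ S : Finset V, G.IsClique (S : Set V) → S.card ≤ n)) ∧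
    (matSpectralNorm W < 1 → 0 < μ →
      (∀ X : Matrix V V ℝ, FeasC G n X →
          X ≠ vecMulVec (charVec Vstar) (charVec Vstar) →
          nuclearNorm X > nuclearNorm (vecMulVec (charVec Vstar) (charVec Vstar))) ∧
      (∀ S : Finset V, G.IsClique (S : Set V) → n ≤ S.card → S = Vstar)) :=
  clique_relaxation_optimality_general V G Vstar n hn hcard hclique W Λ μ hWv hvW hWnorm hΛ heq
end

section
/- Let G = ((U,V), E) be a bipartite graph with |U| = M, |V| = N, and let m, n be positive integers. Then there exists a rank-one matrix X ∈ R^{U×V} with all entries in [0,1], satisfying X_{ij} = 0 for all (i,j) ∈ (U×V) − E and Σ_{i∈U} Σ_{j∈V} X_{ij} ≥ mn, if and only if G contains a biclique with at least mn edges, i.e., there exist I ⊆ U, J ⊆ V with I × J ⊆ E and |I|·|J| ≥ mn. -/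
/-!
A matrix of rank one is an outer product `u vᵀ`, so its support is the rectangle
`supp u × supp v`; vanishing off `E` makes this rectangle a biclique, and entries at most `1`
bound the total sum by its area. Conversely, the outer product of the indicator vectors of a
biclique is a `0/1` matrix of rank one whose sum is the number of edges of the biclique.
-/

open Matrix Finset

namespace Matrix

variable {m n K : Type*} [Fintype m] [Fintype n]

theorem exists_eq_vecMulVec_of_rank_le_one [Field K] (A : Matrix m n K) (hA : A.rank ≤ 1) :
    ∃ (u : m → K) (v : n → K), A = vecMulVec u v := by
  rw [rank_eq_finrank_span_cols, Submodule.finrank_le_one_iff_isPrincipal] at hA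
  obtain ⟨u, hu⟩ := hA
  have hcol : ∀ j, ∃ c : K, c • u = A.col j := fun j =>
    Submodule.mem_span_singleton.mp (hu ▸ Submodule.subset_span ⟨j, rfl⟩)
  choose v hv using hcol
  refine ⟨u, v, ext fun i j => ?_⟩
  rw [vecMulVec_apply, mul_comm, ← smul_eq_mul, ← Pi.smul_apply, hv, col_apply]

theorem rank_eq_zero_iff [Field K] {A : Matrix m n K} : A.rank = 0 ↔ A = 0 := by
  rw [rank_eq_finrank_span_cols, Submodule.finrank_eq_zero, Submodule.span_eq_bot]
  simp only [Set.forall_mem_range, funext_iff, col_apply, Pi.zero_apply, ← Matrix.ext_iff,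
    zero_apply]
  exact forall_comm

theorem rank_vecMulVec_eq_one [Field K] {u : m → K} {v : n → K} (hu : u ≠ 0) (hv : v ≠ 0) :
    (vecMulVec u v).rank = 1 :=
  le_antisymm (rank_vecMulVec_le u v) <| Nat.one_le_iff_ne_zero.mpr <|
    rank_eq_zero_iff.not.mpr fun h => by
      obtain ⟨i, hi⟩ := Function.ne_iff.mp hu
      obtain ⟨j, hj⟩ := Function.ne_iff.mp hv
      exact mul_ne_zero hi hj congr($h i j)

theorem sum_sum_le_card_mul_card {R : Type*} [Semiring R] [PartialOrder R] [IsOrderedAddMonoid R]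
    (A : Matrix m n R) (I : Finset m) (J : Finset n) (hA : ∀ i j, A i j ≠ 0 → i ∈ I ∧ j ∈ J)
    (hle : ∀ i j, A i j ≤ 1) : ∑ i, ∑ j, A i j ≤ #I * #J := by
  calc ∑ i, ∑ j, A i j = ∑ i ∈ I, ∑ j ∈ J, A i j := by
        rw [← sum_subset (subset_univ I)]
        · refine sum_congr rfl fun i _ => (sum_subset (subset_univ J) fun j _ hj => ?_).symm
          exact not_not.mp fun h => hj (hA i j h).2
        · intro i _ hi
          exact sum_eq_zero fun j _ => not_not.mp fun h => hi (hA i j h).1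
    _ ≤ ∑ i ∈ I, ∑ j ∈ J, (1 : R) := sum_le_sum fun i _ => sum_le_sum fun j _ => hle i j
    _ = #I * #J := by simp

theorem sum_sum_vecMulVec {R : Type*} [CommSemiring R] (u : m → R) (v : n → R) :
    ∑ i, ∑ j, vecMulVec u v i j = (∑ i, u i) * ∑ j, v j := by
  simp only [vecMulVec_apply, sum_mul_sum]

end Matrix

/-- for a bipartite graph `G = ((U,V),E)` with `|U| = M`, `|V| = N`, there is
a rank-one matrix `X ∈ [0,1]^{U×V}` vanishing outside `E` with `∑_{i,j} X_{ij} ≥ mn` iff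
`G` contains a biclique with at least `mn` edges. -/
theorem rank_one_iff_biclique
    (M N m n : ℕ) (hm : 0 < m) (hn : 0 < n)
    (E : Set (Fin M × Fin N)) :
    (∃ X : Matrix (Fin M) (Fin N) ℝ,
        X.rank = 1 ∧
        (∀ i j, X i j ∈ Set.Icc (0 : ℝ) 1) ∧
        (∀ i j, (i, j) ∉ E → X i j = 0) ∧
        (m : ℝ) * n ≤ ∑ i, ∑ j, X i j) ↔
    (∃ (I : Finset (Fin M)) (J : Finset (Fin N)),
        (∀ i ∈ I, ∀ j ∈ J, (i, j) ∈ E) ∧ m * n ≤ I.card * J.card) := by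
  classical
  constructor
  · rintro ⟨X, hrank, hX01, hXE, hsum⟩
    obtain ⟨u, v, rfl⟩ := X.exists_eq_vecMulVec_of_rank_le_one hrank.le
    let I : Finset (Fin M) := {i | u i ≠ 0}
    let J : Finset (Fin N) := {j | v j ≠ 0}
    have hsupp : ∀ i j, vecMulVec u v i j ≠ 0 → i ∈ I ∧ j ∈ J := fun i j h =>
      ⟨(mem_filter_univ i).mpr (left_ne_zero_of_mul h),
        (mem_filter_univ j).mpr (right_ne_zero_of_mul h)⟩
    refine ⟨I, J, fun i hi j hj => ?_, ?_⟩
    · by_contra hij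
      exact mul_ne_zero ((mem_filter_univ i).mp hi) ((mem_filter_univ j).mp hj) (hXE i j hij)
    · exact_mod_cast hsum.trans (sum_sum_le_card_mul_card _ I J hsupp fun i j => (hX01 i j).2)
  · rintro ⟨I, J, hIJ, hcard⟩
    have hIJpos : 0 < #I * #J := (Nat.mul_pos hm hn).trans_le hcard
    obtain ⟨i₀, hi₀⟩ := card_pos.mp (Nat.pos_of_mul_pos_right hIJpos)
    obtain ⟨j₀, hj₀⟩ := card_pos.mp (Nat.pos_of_mul_pos_left hIJpos)
    let u : Fin M → ℝ := fun i => if i ∈ I then 1 else 0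
    let v : Fin N → ℝ := fun j => if j ∈ J then 1 else 0
    refine ⟨vecMulVec u v, rank_vecMulVec_eq_one ?_ ?_, fun i j => ?_, fun i j hij => ?_, ?_⟩
    · exact Function.ne_iff.mpr ⟨i₀, by simp [u, hi₀]⟩
    · exact Function.ne_iff.mpr ⟨j₀, by simp [v, hj₀]⟩
    · simp only [vecMulVec_apply, u, v]
      split_ifs <;> norm_num
    · simp only [vecMulVec_apply, u, v]
      split_ifs with hi hj
      · exact absurd (hIJ i hi j hj) hij
      all_goals simp
    · rw [sum_sum_vecMulVec]
      simpa [u, v, sum_boole] using (Nat.cast_le (α := ℝ)).mpr hcard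
end
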